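/- arXiv:2204.13019 — 3 statements merged into one kernel-verified Lean document; each statement's English description precedes it below -/
import Mathlib

section
/- Let x be a valid allocation with allocated-agent set A_x = {a ∈ A : ∑_c x_{a,c} > 0}, and let a* ∈ A_x be an agent that is partially allocated, i.e., 0 < ∑_c x_{a*,c} < 1. Then there exists a valid allocation y with allocated-agent set A_y ⊆ A_x in which a* is fully allocated, i.e., ∑_c y_{a*,c} = 1. -/
open Finset

/-- An allocation instance: quotas, eligibility sets, and priority relations. -/
structure AllocInstance (A C : Type*) where
  quota : C → ℕ
  elig : C → Set A
  prio : C → A → A → Prop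

namespace AllocInstance

variable {A C : Type*} [Fintype A] [Fintype C]

/-- Strict priority: `a ≻_c a'`. -/
def Strict (I : AllocInstance A C) (c : C) (a a' : A) : Prop :=
  I.prio c a a' ∧ ¬ I.prio c a' a

/-- The priority relation of each category is a total preorder on its eligible set. -/
def TotalPreorder (I : AllocInstance A C) : Prop :=
  (∀ c, ∀ a ∈ I.elig c, I.prio c a a) ∧
  (∀ c, ∀ a ∈ I.elig c, ∀ a' ∈ I.elig c, ∀ a'' ∈ I.elig c,
      I.prio c a a' → I.prio c a' a'' → I.prio c a a'') ∧
  (∀ c, ∀ a ∈ I.elig c, ∀ a' ∈ I.elig c, I.prio c a a' ∨ I.prio c a' a)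

/-- The priority relation of each category is a (strict) total order on its eligible
set, i.e. an antisymmetric total preorder. -/
def StrictTotalPrio (I : AllocInstance A C) : Prop :=
  I.TotalPreorder ∧
  (∀ c, ∀ a ∈ I.elig c, ∀ a' ∈ I.elig c, I.prio c a a' → I.prio c a' a → a = a')

/-- A feasible allocation: nonnegative, eligibility (ER), quotas (QR), unit demand. -/
def Feasible (I : AllocInstance A C) (x : A → C → ℝ) : Prop :=
  (∀ a c, 0 ≤ x a c) ∧
  (∀ a c, a ∉ I.elig c → x a c = 0) ∧
  (∀ c, ∑ a, x a c ≤ (I.quota c : ℝ)) ∧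
  (∀ a, ∑ c, x a c ≤ 1)

/-- The size of an allocation. -/
def V (_I : AllocInstance A C) (x : A → C → ℝ) : ℝ := ∑ a, ∑ c, x a c

/-- Respect for priorities (PR). -/
def PR (I : AllocInstance A C) (x : A → C → ℝ) : Prop :=
  ∀ c, ∀ a ∈ I.elig c, ∀ a' ∈ I.elig c,
    I.Strict c a' a → 0 < x a c → ∑ c', x a' c' = 1

/-- Pareto efficiency (PE). -/
def PE (I : AllocInstance A C) (x : A → C → ℝ) : Prop :=
  ¬ ∃ y, I.Feasible y ∧ I.PR y ∧
    (∀ a, ∑ c, x a c ≤ ∑ c, y a c) ∧ (∃ a, ∑ c, x a c < ∑ c, y a c)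

/-- A valid allocation: feasible, respecting priorities, and Pareto efficient. -/
def Valid (I : AllocInstance A C) (x : A → C → ℝ) : Prop :=
  I.Feasible x ∧ I.PR x ∧ I.PE x

/-- An integral allocation. -/
def Integral (_I : AllocInstance A C) (x : A → C → ℝ) : Prop :=
  ∀ a c, x a c = 0 ∨ x a c = 1

/-- A valid perturbation profile: positivity, small effect, consistency. -/
def ValidPerturbation (I : AllocInstance A C) (δ : A → C → ℝ) : Prop :=
  (∀ a c, 0 < δ a c) ∧
  (∑ a, ∑ c, δ a c ≤ 1 / 2) ∧
  (∀ c, ∀ a ∈ I.elig c, ∀ a' ∈ I.elig c, (I.prio c a a' ↔ δ a' c ≥ δ a c))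

/-- The perturbed objective `V_δ`. -/
def Vd (_I : AllocInstance A C) (δ x : A → C → ℝ) : ℝ :=
  ∑ a, ∑ c, x a c * (1 - δ a c)

/-- Category stability (CS): no cyclic trade among categories in which some category
passes its allocation to a strictly higher-priority agent. -/
def CS (I : AllocInstance A C) (x : A → C → ℝ) : Prop :=
  ¬ ∃ (j : ℕ) (c : ℕ → C) (a : ℕ → A),
      2 ≤ j ∧ c j = c 0 ∧ a j = a 0 ∧
      (∀ i < j, 0 < x (a i) (c i) ∧ I.prio (c i) (a (i + 1)) (a i)) ∧
      (∃ i < j, I.Strict (c i) (a (i + 1)) (a i))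

end AllocInstance


open scoped Classical
set_option linter.unusedSectionVars false

namespace Stmt13Aux

variable {A C : Type*} [Fintype A] [Fintype C]

noncomputable def tot (w : A → C → ℝ) (a : A) : ℝ := ∑ c, w a c

noncomputable def colS (w : A → C → ℝ) (c : C) : ℝ := ∑ a, w a c

noncomputable def eC (b : A) (c₀ : C) : A → C → ℝ :=
  fun a c => if a = b ∧ c = c₀ then 1 else 0

lemma eC_nonneg (b : A) (c₀ : C) (a : A) (c : C) : 0 ≤ eC b c₀ a c := by
  unfold eC; split <;> norm_num

lemma eC_row (b : A) (c₀ : C) (a : A) :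
    ∑ c, eC b c₀ a c = if a = b then 1 else 0 := by
  unfold eC
  by_cases h : a = b
  · simp [h]
  · simp [h]

lemma eC_col (b : A) (c₀ : C) (c : C) :
    ∑ a, eC b c₀ a c = if c = c₀ then 1 else 0 := by
  unfold eC
  by_cases h : c = c₀
  · simp [h]
  · simp [h]

lemma eC_ne_zero {b : A} {c₀ : C} {a : A} {c : C} (h : eC b c₀ a c ≠ 0) :
    a = b ∧ c = c₀ := by
  by_contra hc
  exact h (by unfold eC; rw [if_neg hc])

/-- step vector of a chain: each step `(a, c')` in the list moves mass of agent `a`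
from the current column to `c'`. -/
noncomputable def go : C → List (A × C) → A → C → ℝ
  | _, [] => fun _ _ => 0
  | c, (a, c') :: t => fun a'' c'' =>
      (eC a c' a'' c'' - eC a c a'' c'') + go c' t a'' c''

/-- cells from which mass is removed along a chain starting at column `c`. -/
def negCells : C → List (A × C) → List (A × C)
  | _, [] => []
  | c, (a, c') :: t => (a, c) :: negCells c' t

/-- `Chain Nc Pc c l ce`: an alternating chain starting at column `c`, ending at `ce`,
where each step `(a, c')` removes mass of `a` at the current column (an `Nc` cell) and
adds it at `c'` (a `Pc` cell). -/
def Chain (Nc Pc : A → C → Prop) : C → List (A × C) → C → Prop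
  | c, [], ce => ce = c
  | c, (a, c') :: t, ce => Nc a c ∧ Pc a c' ∧ Chain Nc Pc c' t ce

lemma go_row (c : C) (l : List (A × C)) (a : A) : ∑ c'', go c l a c'' = 0 := by
  induction l generalizing c with
  | nil => simp [go]
  | cons p t ih =>
      obtain ⟨a', c'⟩ := p
      simp only [go, Finset.sum_add_distrib, Finset.sum_sub_distrib, eC_row, ih c']
      ring

lemma go_col {Nc Pc : A → C → Prop} {c : C} {l : List (A × C)} {ce : C}
    (hch : Chain Nc Pc c l ce) (c'' : C) :
    ∑ a, go c l a c'' = (if c'' = ce then 1 else 0) - (if c'' = c then 1 else 0) := by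
  induction l generalizing c with
  | nil =>
      obtain rfl : ce = c := hch
      simp [go]
  | cons p t ih =>
      obtain ⟨a', c'⟩ := p
      obtain ⟨_, _, hch'⟩ := hch
      simp only [go, Finset.sum_add_distrib, Finset.sum_sub_distrib, eC_col, ih hch']
      ring

lemma go_neg {c : C} {l : List (A × C)} {a : A} {c'' : C}
    (h : go c l a c'' < 0) : (a, c'') ∈ negCells c l := by
  induction l generalizing c with
  | nil => simp [go] at h
  | cons p t ih =>
      obtain ⟨a', c'⟩ := p
      simp only [go] at h
      simp only [negCells, List.mem_cons]
      by_cases hmem : (a, c'') ∈ negCells c' t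
      · exact Or.inr hmem
      · left
        have h2 : ¬ go c' t a c'' < 0 := fun hlt => hmem (ih hlt)
        push_neg at h2
        have h3 : eC a' c' a c'' - eC a' c a c'' < 0 := by linarith
        have h4 : eC a' c a c'' ≠ 0 := by
          intro hz
          have := eC_nonneg a' c' a c''
          rw [hz] at h3; linarith
        obtain ⟨rfl, rfl⟩ := eC_ne_zero h4
        rfl

lemma go_ne_zero {c : C} {l : List (A × C)} {a : A} {c'' : C}
    (h : go c l a c'' ≠ 0) : (a, c'') ∈ l ∨ (a, c'') ∈ negCells c l := by
  induction l generalizing c with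
  | nil => simp [go] at h
  | cons p t ih =>
      obtain ⟨a', c'⟩ := p
      simp only [go] at h
      simp only [negCells, List.mem_cons]
      by_cases hmem : (a, c'') ∈ t ∨ (a, c'') ∈ negCells c' t
      · rcases hmem with h1 | h1
        · exact Or.inl (Or.inr h1)
        · exact Or.inr (Or.inr h1)
      · push_neg at hmem
        have h2 : go c' t a c'' = 0 := by
          by_contra hz
          rcases ih hz with h1 | h1
          · exact hmem.1 h1
          · exact hmem.2 h1
        rw [h2, add_zero] at h
        by_cases he : eC a' c' a c'' ≠ 0
        · obtain ⟨rfl, rfl⟩ := eC_ne_zero he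
          exact Or.inl (Or.inl rfl)
        · push_neg at he
          rw [he, zero_sub, neg_ne_zero] at h
          obtain ⟨rfl, rfl⟩ := eC_ne_zero h
          exact Or.inr (Or.inl rfl)

lemma go_bound (c : C) (l : List (A × C)) (a : A) (c'' : C) :
    -(l.length : ℝ) ≤ go c l a c'' := by
  induction l generalizing c with
  | nil => simp [go]
  | cons p t ih =>
      obtain ⟨a', c'⟩ := p
      simp only [go, List.length_cons]
      have h1 := ih c'
      have h2 : eC a' c' a c'' - eC a' c a c'' ≥ -1 := by
        have := eC_nonneg a' c' a c''
        have h3 : eC a' c a c'' ≤ 1 := by unfold eC; split <;> norm_num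
        linarith
      push_cast
      linarith

lemma chain_negCells {Nc Pc : A → C → Prop} {c : C} {l : List (A × C)} {ce : C}
    (hch : Chain Nc Pc c l ce) {a : A} {c'' : C} (h : (a, c'') ∈ negCells c l) :
    Nc a c'' := by
  induction l generalizing c with
  | nil => simp [negCells] at h
  | cons p t ih =>
      obtain ⟨a', c'⟩ := p
      obtain ⟨hN, hP, hch'⟩ := hch
      simp only [negCells, List.mem_cons] at h
      rcases h with h | h
      · obtain ⟨rfl, rfl⟩ := Prod.ext_iff.mp h
        exact hN
      · exact ih hch' h

lemma chain_posCells {Nc Pc : A → C → Prop} {c : C} {l : List (A × C)} {ce : C}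
    (hch : Chain Nc Pc c l ce) {a : A} {c'' : C} (h : (a, c'') ∈ l) :
    Pc a c'' := by
  induction l generalizing c with
  | nil => simp at h
  | cons p t ih =>
      obtain ⟨a', c'⟩ := p
      obtain ⟨hN, hP, hch'⟩ := hch
      rcases List.mem_cons.mp h with h | h
      · obtain ⟨rfl, rfl⟩ := Prod.ext_iff.mp h
        exact hP
      · exact ih hch' h

/-- a chain can be extended by one step. -/
lemma chain_append {Nc Pc : A → C → Prop} {c : C} {l : List (A × C)} {ce : C}
    (hch : Chain Nc Pc c l ce) {a : A} {c' : C} (hN : Nc a ce) (hP : Pc a c') :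
    Chain Nc Pc c (l ++ [(a, c')]) c' := by
  induction l generalizing c with
  | nil =>
      obtain rfl : ce = c := hch
      exact ⟨hN, hP, rfl⟩
  | cons p t ih =>
      obtain ⟨a'', c''⟩ := p
      obtain ⟨h1, h2, h3⟩ := hch
      exact ⟨h1, h2, ih h3⟩


/-- the full chain vector: receiving agent `b` gets mass at `c₀`, then the chain
moves mass from `c₀` to the end column. -/
noncomputable def cvec (b : A) (c₀ : C) (l : List (A × C)) : A → C → ℝ :=
  fun a c => eC b c₀ a c + go c₀ l a c

lemma cvec_row (b : A) (c₀ : C) (l : List (A × C)) (a : A) :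
    ∑ c, cvec b c₀ l a c = if a = b then 1 else 0 := by
  unfold cvec
  rw [Finset.sum_add_distrib, eC_row, go_row, add_zero]

lemma cvec_col {Nc Pc : A → C → Prop} {c₀ : C} {l : List (A × C)} {ce : C}
    (hch : Chain Nc Pc c₀ l ce) (b : A) (c'' : C) :
    ∑ a, cvec b c₀ l a c'' = if c'' = ce then 1 else 0 := by
  unfold cvec
  rw [Finset.sum_add_distrib, eC_col, go_col hch]
  ring

lemma cvec_lb (b : A) (c₀ : C) (l : List (A × C)) (a : A) (c : C) :
    -((l.length : ℝ) + 2) ≤ cvec b c₀ l a c := by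
  unfold cvec
  have h1 := eC_nonneg b c₀ a c
  have h2 := go_bound c₀ l a c
  linarith

lemma cvec_neg {b : A} {c₀ : C} {l : List (A × C)} {a : A} {c : C}
    (h : cvec b c₀ l a c < 0) : (a, c) ∈ negCells c₀ l := by
  unfold cvec at h
  have h1 := eC_nonneg b c₀ a c
  exact go_neg (by linarith)

lemma cvec_ne_zero {b : A} {c₀ : C} {l : List (A × C)} {a : A} {c : C}
    (h : cvec b c₀ l a c ≠ 0) :
    (a = b ∧ c = c₀) ∨ (a, c) ∈ l ∨ (a, c) ∈ negCells c₀ l := by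
  unfold cvec at h
  by_cases h1 : go c₀ l a c ≠ 0
  · rcases go_ne_zero h1 with h2 | h2
    · exact Or.inr (Or.inl h2)
    · exact Or.inr (Or.inr h2)
  · push_neg at h1
    rw [h1, add_zero] at h
    exact Or.inl (eC_ne_zero h)

lemma list_min_pos (W : A → C → ℝ) (cells : List (A × C))
    (h : ∀ p ∈ cells, 0 < W p.1 p.2) :
    0 < (cells.map (fun p => W p.1 p.2)).foldr min 1 := by
  induction cells with
  | nil => norm_num
  | cons p t ih =>
      simp only [List.map_cons, List.foldr_cons]
      exact lt_min (h p (List.mem_cons_self ..))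
        (ih (fun q hq => h q (List.mem_cons_of_mem _ hq)))

lemma list_min_le (W : A → C → ℝ) (cells : List (A × C)) {p : A × C}
    (h : p ∈ cells) :
    (cells.map (fun q => W q.1 q.2)).foldr min 1 ≤ W p.1 p.2 := by
  induction cells with
  | nil => simp at h
  | cons q t ih =>
      simp only [List.map_cons, List.foldr_cons]
      rcases List.mem_cons.mp h with h1 | h1
      · rw [h1]; exact min_le_left _ _
      · exact le_trans (min_le_right _ _) (ih h1)

/-- generic nonnegativity of a shifted allocation for small enough `ε`. -/
lemma shift_nonneg (W : A → C → ℝ) (hW : ∀ a c, 0 ≤ W a c)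
    (v : A → C → ℝ) (n : ℝ) (hlb : ∀ a c, -n ≤ v a c)
    (cells : List (A × C)) (hcells : ∀ p ∈ cells, 0 < W p.1 p.2)
    (hneg : ∀ a c, v a c < 0 → (a, c) ∈ cells) :
    ∃ ε₀ : ℝ, 0 < ε₀ ∧ ∀ ε : ℝ, 0 < ε → ε ≤ ε₀ →
      ∀ a c, 0 ≤ W a c + ε * v a c := by
  set m := (cells.map (fun p => W p.1 p.2)).foldr min 1 with hm
  have hmpos : 0 < m := list_min_pos W cells hcells
  have hn1 : 0 < max n 1 + 1 := by
    have := le_max_right n 1; linarith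
  refine ⟨m / (max n 1 + 1), div_pos hmpos hn1, ?_⟩
  intro ε hε hε₀ a c
  by_cases hv : 0 ≤ v a c
  · have := hW a c
    nlinarith
  · push_neg at hv
    have hmem := hneg a c hv
    have hWm : m ≤ W a c := list_min_le W cells hmem
    have hvlb : -n ≤ v a c := hlb a c
    have hn : 0 < n := by
      by_contra hn
      push_neg at hn
      linarith
    have h1 : ε * n ≤ m / (max n 1 + 1) * n := by
      apply mul_le_mul_of_nonneg_right hε₀ (le_of_lt hn)
    have h2 : m / (max n 1 + 1) * n < m := by
      rw [div_mul_eq_mul_div, div_lt_iff₀ hn1]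
      have : n ≤ max n 1 := le_max_left n 1
      nlinarith
    have h3 : ε * v a c ≥ -(ε * n) := by nlinarith
    linarith

/-- dichotomy: if agent `b` has a positive row surplus in `d`, there is a chain from
one of its positive cells ending either at a column with positive column sum, or at a
column containing a cell of an agent with negative row sum. -/
lemma chain_dichotomy (d : A → C → ℝ) (b : A) (hb : 0 < ∑ c, d b c) :
    ∃ (c₀ : C) (l : List (A × C)) (ce : C), 0 < d b c₀ ∧
      Chain (fun a c => d a c < 0) (fun a c => 0 < d a c) c₀ l ce ∧
      (0 < ∑ a, d a ce ∨ ∃ a', d a' ce < 0 ∧ ∑ c, d a' c < 0) := by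
  by_contra hcon
  push_neg at hcon
  set Nc : A → C → Prop := fun a c => d a c < 0 with hNc
  set Pc : A → C → Prop := fun a c => 0 < d a c with hPc
  set R : Set C := {c | ∃ c₀ l, 0 < d b c₀ ∧ Chain Nc Pc c₀ l c} with hR
  have hcol : ∀ c ∈ R, ∑ a, d a c ≤ 0 := by
    rintro c ⟨c₀, l, h1, h2⟩
    have := hcon c₀ l c h1 h2
    exact this.1
  have hrow : ∀ c ∈ R, ∀ a', d a' c < 0 → 0 ≤ ∑ c', d a' c' := by
    rintro c ⟨c₀, l, h1, h2⟩ a' h3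
    exact (hcon c₀ l c h1 h2).2 a' h3
  have hclosure : ∀ a c, c ∈ R → d a c < 0 → ∀ c', 0 < d a c' → c' ∈ R := by
    rintro a c ⟨c₀, l, h1, h2⟩ hneg c' hpos
    exact ⟨c₀, l ++ [(a, c')], h1, chain_append h2 hneg hpos⟩
  set Rf : Finset C := univ.filter (· ∈ R) with hRf
  have hmem_Rf : ∀ c, c ∈ Rf ↔ c ∈ R := by
    intro c; simp [hRf]
  have hT1 : ∑ c ∈ Rf, ∑ a, d a c ≤ 0 :=
    Finset.sum_nonpos (fun c hc => hcol c ((hmem_Rf c).mp hc))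
  have hT2 : ∑ c ∈ Rf, ∑ a, d a c = ∑ a, ∑ c ∈ Rf, d a c := Finset.sum_comm
  have hrow_ge : ∀ a, (∃ c ∈ Rf, d a c < 0) → ∀ c', 0 < d a c' → c' ∈ Rf := by
    rintro a ⟨c, hc, hneg⟩ c' hpos
    exact (hmem_Rf c').mpr (hclosure a c ((hmem_Rf c).mp hc) hneg c' hpos)
  have hterm : ∀ a, 0 ≤ ∑ c ∈ Rf, d a c := by
    intro a
    by_cases hn : ∃ c ∈ Rf, d a c < 0
    · have hout : ∑ c ∈ Rfᶜ, d a c ≤ 0 := by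
        apply Finset.sum_nonpos
        intro c hc
        by_contra hpos
        push_neg at hpos
        have := hrow_ge a hn c hpos
        simp only [Finset.mem_compl] at hc
        exact hc this
      have hsplit : ∑ c ∈ Rf, d a c + ∑ c ∈ Rfᶜ, d a c = ∑ c, d a c :=
        Finset.sum_add_sum_compl Rf _
      obtain ⟨c, hc, hneg⟩ := hn
      have := hrow c ((hmem_Rf c).mp hc) a hneg
      linarith
    · push_neg at hn
      exact Finset.sum_nonneg (fun c hc => hn c hc)
  have htermb : 0 < ∑ c ∈ Rf, d b c := by
    by_cases hn : ∃ c ∈ Rf, d b c < 0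
    · have hout : ∑ c ∈ Rfᶜ, d b c ≤ 0 := by
        apply Finset.sum_nonpos
        intro c hc
        by_contra hpos
        push_neg at hpos
        have := hrow_ge b hn c hpos
        simp only [Finset.mem_compl] at hc
        exact hc this
      have hsplit : ∑ c ∈ Rf, d b c + ∑ c ∈ Rfᶜ, d b c = ∑ c, d b c :=
        Finset.sum_add_sum_compl Rf _
      linarith
    · push_neg at hn
      have hex : ∃ c₀, 0 < d b c₀ := by
        by_contra hex
        push_neg at hex
        have : ∑ c, d b c ≤ 0 := Finset.sum_nonpos (fun c _ => hex c)
        linarith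
      obtain ⟨c₀, hc₀⟩ := hex
      have hc₀R : c₀ ∈ Rf := (hmem_Rf c₀).mpr ⟨c₀, [], hc₀, rfl⟩
      exact Finset.sum_pos' (fun c hc => hn c hc) ⟨c₀, hc₀R, hc₀⟩
  have : 0 < ∑ a, ∑ c ∈ Rf, d a c :=
    Finset.sum_pos' (fun a _ => hterm a) ⟨b, Finset.mem_univ b, htermb⟩
  rw [← hT2] at this
  linarith

/-- existence of a maximal element of a nonempty finite set with respect to a
transitive irreflexive relation. -/
lemma exists_maximal_rel {α : Type*} (r : α → α → Prop) :
    ∀ (n : ℕ) (s : Finset α), s.card = n → s.Nonempty →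
      (∀ a ∈ s, ∀ b ∈ s, ∀ c ∈ s, r a b → r b c → r a c) →
      (∀ a ∈ s, ¬ r a a) →
      ∃ m ∈ s, ∀ b ∈ s, ¬ r b m := by
  intro n
  induction n using Nat.strong_induction_on with
  | _ n ih =>
    intro s hcard hne htrans hirr
    obtain ⟨a, ha⟩ := hne
    by_cases hmax : ∀ b ∈ s, ¬ r b a
    · exact ⟨a, ha, hmax⟩
    · push_neg at hmax
      obtain ⟨b0, hb0, hrb0⟩ := hmax
      set s' := s.filter (fun b => r b a) with hs'
      have hsub : s' ⊆ s := Finset.filter_subset _ _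
      have has' : a ∉ s' := by
        simp only [hs', Finset.mem_filter]
        rintro ⟨_, h⟩
        exact hirr a ha h
      have hss : s' ⊂ s := Finset.ssubset_iff_of_subset hsub |>.mpr ⟨a, ha, has'⟩
      have hlt : s'.card < n := hcard ▸ Finset.card_lt_card hss
      have hne' : s'.Nonempty := ⟨b0, Finset.mem_filter.mpr ⟨hb0, hrb0⟩⟩
      obtain ⟨m, hm, hmax'⟩ := ih s'.card hlt s' rfl hne'
        (fun x hx y hy z hz => htrans x (hsub hx) y (hsub hy) z (hsub hz))
        (fun x hx => hirr x (hsub hx))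
      refine ⟨m, hsub hm, ?_⟩
      intro b hb hrbm
      have hrma : r m a := (Finset.mem_filter.mp hm).2
      have hrba : r b a := htrans b hb m (hsub hm) a ha hrbm hrma
      exact hmax' b (Finset.mem_filter.mpr ⟨hb, hrba⟩) hrbm

lemma continuous_cell (a : A) (c : C) :
    Continuous fun w : A → C → ℝ => w a c :=
  (continuous_apply c).comp (continuous_apply a)

lemma continuous_tot (a : A) :
    Continuous fun w : A → C → ℝ => tot w a := by
  unfold tot
  exact continuous_finset_sum _ (fun c _ => continuous_cell a c)

/-- argmax over a closed set of allocations with cells in `[0,1]`. -/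
lemma exists_argmax (S : Set (A → C → ℝ)) (hne : S.Nonempty) (hcl : IsClosed S)
    (hbd : ∀ w ∈ S, ∀ a c, w a c ∈ Set.Icc (0:ℝ) 1)
    (f : (A → C → ℝ) → ℝ) (hf : Continuous f) :
    ∃ w ∈ S, ∀ z ∈ S, f z ≤ f w := by
  have hK : IsCompact (Set.pi Set.univ fun _ : A =>
      Set.pi Set.univ fun _ : C => Set.Icc (0:ℝ) 1) :=
    isCompact_univ_pi fun _ => isCompact_univ_pi fun _ => isCompact_Icc
  have hsub : S ⊆ Set.pi Set.univ fun _ : A =>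
      Set.pi Set.univ fun _ : C => Set.Icc (0:ℝ) 1 := by
    intro w hw
    rw [Set.mem_univ_pi]
    intro a
    rw [Set.mem_univ_pi]
    intro c
    exact hbd w hw a c
  have hS : IsCompact S := hK.of_isClosed_subset hcl hsub
  obtain ⟨w, hw, hmax⟩ := hS.exists_isMaxOn hne hf.continuousOn
  exact ⟨w, hw, fun z hz => hmax hz⟩



lemma strict_trans (I : AllocInstance A C) (hpre : I.TotalPreorder) {c : C} {a b d : A}
    (ha : a ∈ I.elig c) (hb : b ∈ I.elig c) (hd : d ∈ I.elig c)
    (h1 : I.Strict c a b) (h2 : I.Strict c b d) : I.Strict c a d := by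
  obtain ⟨hrefl, htrans, htotal⟩ := hpre
  refine ⟨htrans c a ha b hb d hd h1.1 h2.1, ?_⟩
  intro hda
  exact h2.2 (htrans c d hd a ha b hb hda h1.1)

/-- existence of a maximal hungry strict superior ("gate"). -/
lemma exists_gate (I : AllocInstance A C) (hpre : I.TotalPreorder) (x : A → C → ℝ)
    {e : A} {c : C} (he : e ∈ I.elig c)
    (hgated : ∃ b' ∈ I.elig c, I.Strict c b' e ∧ tot x b' < 1) :
    ∃ g ∈ I.elig c, I.Strict c g e ∧ tot x g < 1 ∧
      ∀ b'' ∈ I.elig c, I.Strict c b'' g → ¬ (tot x b'' < 1) := by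
  set s : Finset A := Finset.univ.filter
    (fun b' => b' ∈ I.elig c ∧ I.Strict c b' e ∧ tot x b' < 1) with hs
  obtain ⟨b0, hb0, hb1, hb2⟩ := hgated
  have hb0s : b0 ∈ s := by
    rw [hs, Finset.mem_filter]
    exact ⟨Finset.mem_univ _, hb0, hb1, hb2⟩
  have hmem : ∀ b ∈ s, b ∈ I.elig c ∧ I.Strict c b e ∧ tot x b < 1 := by
    intro b hbs
    rw [hs, Finset.mem_filter] at hbs
    exact hbs.2
  obtain ⟨m, hm, hmax⟩ := exists_maximal_rel (I.Strict c) s.card s rfl ⟨b0, hb0s⟩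
    (fun p hp q hq r hr hpq hqr =>
      strict_trans I hpre (hmem p hp).1 (hmem q hq).1 (hmem r hr).1 hpq hqr)
    (fun p _ hp => hp.2 hp.1)
  obtain ⟨hmelig, hmst, hmhun⟩ := hmem m hm
  refine ⟨m, hmelig, hmst, hmhun, ?_⟩
  intro b'' hb''elig hb''st hb''hun
  have hb''e : I.Strict c b'' e := strict_trans I hpre hb''elig hmelig he hb''st hmst
  have : b'' ∈ s := by
    rw [hs, Finset.mem_filter]
    exact ⟨Finset.mem_univ _, hb''elig, hb''e, hb''hun⟩
  exact hmax b'' this hb''st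

lemma tot_shift (W v : A → C → ℝ) (ε : ℝ) (a : A) :
    tot (fun a' c' => W a' c' + ε * v a' c') a = tot W a + ε * ∑ c, v a c := by
  unfold tot
  rw [Finset.sum_add_distrib, Finset.mul_sum]

lemma colS_shift (W v : A → C → ℝ) (ε : ℝ) (c : C) :
    colS (fun a' c' => W a' c' + ε * v a' c') c = colS W c + ε * ∑ a, v a c := by
  unfold colS
  rw [Finset.sum_add_distrib, Finset.mul_sum]

lemma tot_pos_cell {w : A → C → ℝ} (hw : ∀ a c, 0 ≤ w a c) {a : A} {c : C}
    (h : 0 < w a c) : 0 < tot w a := by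
  unfold tot
  calc (0:ℝ) < w a c := h
  _ ≤ ∑ c', w a c' := Finset.single_le_sum (fun c' _ => hw a c') (Finset.mem_univ c)

lemma pos_cell_of_tot {w : A → C → ℝ} (hw : ∀ a c, 0 ≤ w a c) {a : A}
    (h : 0 < tot w a) : ∃ c, 0 < w a c := by
  by_contra hc
  push_neg at hc
  have : tot w a ≤ 0 := Finset.sum_nonpos (fun c _ => hc c)
  linarith

lemma cell_le_tot {w : A → C → ℝ} (hw : ∀ a c, 0 ≤ w a c) (a : A) (c : C) :
    w a c ≤ tot w a :=
  Finset.single_le_sum (fun c' _ => hw a c') (Finset.mem_univ c)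

lemma chain_mono {Nc Pc Nc' Pc' : A → C → Prop} {c : C} {l : List (A × C)} {ce : C}
    (hN : ∀ a c', Nc a c' → Nc' a c') (hP : ∀ a c', Pc a c' → Pc' a c')
    (hch : Chain Nc Pc c l ce) : Chain Nc' Pc' c l ce := by
  induction l generalizing c with
  | nil => exact hch
  | cons p t ih =>
      obtain ⟨a, c'⟩ := p
      exact ⟨hN _ _ hch.1, hP _ _ hch.2.1, ih hch.2.2⟩

lemma last_sat {α : Type*} (P : α → Prop) (L : List α) :
    (∀ p ∈ L, ¬ P p) ∨
      ∃ L₁ p L₂, L = L₁ ++ p :: L₂ ∧ P p ∧ ∀ q ∈ L₂, ¬ P q := by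
  classical
  induction L with
  | nil => left; simp
  | cons a t ih =>
      rcases ih with h | ⟨L₁, p, L₂, heq, hp, hL₂⟩
      · by_cases hP : P a
        · right; exact ⟨[], a, t, rfl, hP, h⟩
        · left
          intro q hq
          rcases List.mem_cons.mp hq with rfl | hq
          · exact hP
          · exact h q hq
      · right
        exact ⟨a :: L₁, p, L₂, by rw [heq]; rfl, hp, hL₂⟩

lemma chain_suffix {Nc Pc : A → C → Prop} {L₁ : List (A × C)} {a : A} {cj : C}
    {L₂ : List (A × C)} {ce : C} :
    ∀ {c : C}, Chain Nc Pc c (L₁ ++ (a, cj) :: L₂) ce → Chain Nc Pc cj L₂ ce := by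
  induction L₁ with
  | nil => exact fun hch => hch.2.2
  | cons q t ih =>
      obtain ⟨a', c'⟩ := q
      exact fun hch => ih hch.2.2

/-- build a PR-feasible strict improvement of `x` from a receiving agent and a chain. -/
lemma build_dominator (I : AllocInstance A C) (x w : A → C → ℝ)
    (hFx : I.Feasible x) (hPRx : I.PR x) (hFw : I.Feasible w)
    (r : A) (cr : C) (lr : List (A × C)) (ce : C)
    (hch : Chain (fun a c => w a c < x a c) (fun a c => x a c < w a c) cr lr ce)
    (hrelig : r ∈ I.elig cr)
    (hrhun : tot x r < 1)
    (hrmax : ∀ b'' ∈ I.elig cr, I.Strict cr b'' r → tot x b'' = 1)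
    (hungated : ∀ p ∈ lr, ∀ b'' ∈ I.elig p.2, I.Strict p.2 b'' p.1 → tot x b'' = 1)
    (hslack : colS x ce < (I.quota ce : ℝ)) :
    ∃ y, I.Feasible y ∧ I.PR y ∧ (∀ a, tot x a ≤ tot y a) ∧ tot x r < tot y r := by
  obtain ⟨hx0, hxER, hxQ, hxR⟩ := hFx
  obtain ⟨hw0, hwER, hwQ, hwR⟩ := hFw
  set v : A → C → ℝ := cvec r cr lr with hv
  have hnegx : ∀ p ∈ negCells cr lr, 0 < x p.1 p.2 := by
    rintro ⟨a, c⟩ hp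
    have h1 : w a c < x a c := chain_negCells hch hp
    have := hw0 a c
    linarith
  have hnegmem : ∀ a c, v a c < 0 → (a, c) ∈ negCells cr lr :=
    fun a c h => cvec_neg h
  obtain ⟨ε₀, hε₀, hshift⟩ := shift_nonneg x hx0 v ((lr.length : ℝ) + 2)
    (cvec_lb r cr lr) (negCells cr lr) hnegx hnegmem
  set ε : ℝ := min ε₀ (min (1 - tot x r) ((I.quota ce : ℝ) - colS x ce)) with hε
  have hεpos : 0 < ε := by
    apply lt_min hε₀
    apply lt_min <;> linarith
  have hεle : ε ≤ ε₀ := min_le_left _ _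
  have hεrow : ε ≤ 1 - tot x r := le_trans (min_le_right _ _) (min_le_left _ _)
  have hεcol : ε ≤ (I.quota ce : ℝ) - colS x ce :=
    le_trans (min_le_right _ _) (min_le_right _ _)
  set y : A → C → ℝ := fun a c => x a c + ε * v a c with hy
  have hrow : ∀ a, tot y a = tot x a + ε * (if a = r then 1 else 0) := by
    intro a
    rw [hy, tot_shift, hv, cvec_row]
  have hcol : ∀ c, colS y c = colS x c + ε * (if c = ce then 1 else 0) := by
    intro c
    rw [hy, colS_shift, hv, cvec_col hch]
  have hy0 : ∀ a c, 0 ≤ y a c := fun a c => hshift ε hεpos hεle a c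
  have hsupp : ∀ a c, y a c ≠ 0 →
      0 < x a c ∨ (a = r ∧ c = cr) ∨ (a, c) ∈ lr := by
    intro a c hne
    by_cases hxac : 0 < x a c
    · exact Or.inl hxac
    · have hx0' : x a c = 0 := le_antisymm (not_lt.mp hxac) (hx0 a c)
      right
      have hvne : v a c ≠ 0 := by
        intro h0
        apply hne
        rw [hy]
        simp only [hx0', h0, mul_zero, add_zero]
      rcases cvec_ne_zero hvne with h | h | h
      · exact Or.inl h
      · exact Or.inr h
      · exfalso
        have := hnegx _ h
        simp only at this
        linarith
  have hFy : I.Feasible y := by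
    refine ⟨hy0, ?_, ?_, ?_⟩
    · intro a c hnelig
      by_contra hne
      rcases hsupp a c hne with h | ⟨rfl, rfl⟩ | h
      · rw [hxER a c hnelig] at h; linarith
      · exact hnelig hrelig
      · have hPc : x a c < w a c := chain_posCells hch h
        have : w a c = 0 := hwER a c hnelig
        have := hx0 a c
        linarith
    · intro c
      have : (∑ a, y a c) = colS y c := rfl
      rw [this, hcol]
      by_cases hc : c = ce
      · subst hc
        simp only [if_pos rfl, if_true, mul_one]
        linarith
      · simp only [if_neg hc, mul_zero, add_zero]
        exact hxQ c
    · intro a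
      have : (∑ c, y a c) = tot y a := rfl
      rw [this, hrow]
      by_cases ha : a = r
      · subst ha
        simp only [if_pos rfl, if_true, mul_one]
        linarith
      · simp only [if_neg ha, mul_zero, add_zero]
        exact hxR a
  have hPRy : I.PR y := by
    intro c e helig b' hb'elig hst hpos
    have hxb' : tot x b' = 1 := by
      rcases hsupp e c (ne_of_gt hpos) with h | ⟨rfl, rfl⟩ | h
      · exact hPRx c e helig b' hb'elig hst h
      · exact hrmax b' hb'elig hst
      · exact hungated (e, c) h b' hb'elig hst
    have hb'r : b' ≠ r := by
      intro h
      rw [h] at hxb'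
      linarith
    have : (∑ c', y b' c') = tot y b' := rfl
    rw [this, hrow, if_neg hb'r, mul_zero, add_zero]
    exact hxb'
  refine ⟨y, hFy, hPRy, ?_, ?_⟩
  · intro a
    rw [hrow]
    have : 0 ≤ ε * (if a = r then 1 else 0) := by
      apply mul_nonneg (le_of_lt hεpos)
      split <;> norm_num
    linarith
  · rw [hrow, if_pos rfl, mul_one]
    linarith

/-- a valid allocation cannot be strictly dominated (in totals) by any feasible
allocation. -/
lemma no_feasible_dominator (I : AllocInstance A C) (hpre : I.TotalPreorder)
    (x : A → C → ℝ) (hval : I.Valid x) (w : A → C → ℝ) (hFw : I.Feasible w)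
    (hdom : ∀ a, tot x a ≤ tot w a) (b : A) (hb : tot x b < tot w b) : False := by
  obtain ⟨hFx, hPRx, hPEx⟩ := hval
  set d : A → C → ℝ := fun a c => w a c - x a c with hd
  have hrowd : ∀ a, ∑ c, d a c = tot w a - tot x a := by
    intro a
    simp only [hd, tot, Finset.sum_sub_distrib]
  have hcold : ∀ c, ∑ a, d a c = colS w c - colS x c := by
    intro c
    simp only [hd, colS, Finset.sum_sub_distrib]
  have hb' : 0 < ∑ c, d b c := by rw [hrowd]; linarith
  obtain ⟨c₀, l, ce, hstart, hch0, hterm⟩ := chain_dichotomy d b hb'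
  have hch : Chain (fun a c => w a c < x a c) (fun a c => x a c < w a c) c₀ l ce := by
    refine chain_mono ?_ ?_ hch0
    · intro a c h
      simp only [hd] at h
      linarith
    · intro a c h
      simp only [hd] at h
      linarith
  have hcolpos : 0 < ∑ a, d a ce := by
    rcases hterm with h | ⟨a', _, h2⟩
    · exact h
    · exfalso
      rw [hrowd] at h2
      have := hdom a'
      linarith
  have hslack : colS x ce < (I.quota ce : ℝ) := by
    have h2 : colS w ce ≤ (I.quota ce : ℝ) := hFw.2.2.1 ce
    rw [hcold] at hcolpos
    linarith
  have hle1 : ∀ a'', tot x a'' ≤ 1 := fun a'' => hFx.2.2.2 a''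
  have hnotgated : ∀ (e : A) (c : C),
      ¬ (∃ b' ∈ I.elig c, I.Strict c b' e ∧ tot x b' < 1) →
      ∀ b'' ∈ I.elig c, I.Strict c b'' e → tot x b'' = 1 := by
    intro e c hng b'' hb'' hst
    by_contra hne
    exact hng ⟨b'', hb'', hst, lt_of_le_of_ne (hle1 b'') hne⟩
  have hPcElig : ∀ (a : A) (c : C), x a c < w a c → a ∈ I.elig c := by
    intro a c h
    by_contra hne
    have h1 : w a c = 0 := hFw.2.1 a c hne
    have := hFx.1 a c
    linarith
  rcases last_sat (fun p : A × C =>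
      ∃ b' ∈ I.elig p.2, I.Strict p.2 b' p.1 ∧ tot x b' < 1) l with
    hall | ⟨L₁, pj, L₂, heq, hgj, hL₂⟩
  · -- no gated cell inside the chain
    have hbelig : b ∈ I.elig c₀ := by
      apply hPcElig
      simp only [hd] at hstart
      linarith
    by_cases hsg : ∃ b' ∈ I.elig c₀, I.Strict c₀ b' b ∧ tot x b' < 1
    · -- gate at the start cell
      obtain ⟨g, hgelig, hgst, hghun, hgmax⟩ := exists_gate I hpre x hbelig hsg
      obtain ⟨y, h1, h2, h3, h4⟩ := build_dominator I x w hFx hPRx hFw g c₀ l ce hch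
        hgelig hghun
        (fun b'' hb'' hst => by
          by_contra hne
          exact hgmax b'' hb'' hst (lt_of_le_of_ne (hle1 b'') hne))
        (fun p hp => hnotgated p.1 p.2 (hall p hp))
        hslack
      exact hPEx ⟨y, h1, h2, h3, g, h4⟩
    · -- no gate anywhere: feed b itself
      have hbhun : tot x b < 1 := lt_of_lt_of_le hb (hFw.2.2.2 b)
      obtain ⟨y, h1, h2, h3, h4⟩ := build_dominator I x w hFx hPRx hFw b c₀ l ce hch
        hbelig hbhun
        (hnotgated b c₀ hsg)
        (fun p hp => hnotgated p.1 p.2 (hall p hp))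
        hslack
      exact hPEx ⟨y, h1, h2, h3, b, h4⟩
  · -- gated cell inside the chain; take the last one
    obtain ⟨aj, cj⟩ := pj
    rw [heq] at hch
    have hchsuf : Chain (fun a c => w a c < x a c) (fun a c => x a c < w a c) cj L₂ ce :=
      chain_suffix hch
    have hajelig : aj ∈ I.elig cj := by
      apply hPcElig
      have : (aj, cj) ∈ l := by rw [heq]; simp
      have hPc : x aj cj < w aj cj := by
        rw [heq] at hch0
        have := chain_posCells hch0 (by simp : (aj, cj) ∈ L₁ ++ (aj, cj) :: L₂)
        simp only [hd] at this
        linarith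
      exact hPc
    obtain ⟨g, hgelig, hgst, hghun, hgmax⟩ := exists_gate I hpre x hajelig hgj
    obtain ⟨y, h1, h2, h3, h4⟩ := build_dominator I x w hFx hPRx hFw g cj L₂ ce hchsuf
      hgelig hghun
      (fun b'' hb'' hst => by
        by_contra hne
        exact hgmax b'' hb'' hst (lt_of_le_of_ne (hle1 b'') hne))
      (fun p hp => hnotgated p.1 p.2 (hL₂ p hp))
      hslack
    exact hPEx ⟨y, h1, h2, h3, g, h4⟩



lemma feasible_closed (I : AllocInstance A C) :
    IsClosed {w : A → C → ℝ | I.Feasible w} := by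
  have h1 : IsClosed {w : A → C → ℝ | ∀ a c, 0 ≤ w a c} := by
    rw [Set.setOf_forall]
    refine isClosed_iInter fun a => ?_
    rw [Set.setOf_forall]
    exact isClosed_iInter fun c => isClosed_le continuous_const (continuous_cell a c)
  have h2 : IsClosed {w : A → C → ℝ | ∀ a c, a ∉ I.elig c → w a c = 0} := by
    rw [Set.setOf_forall]
    refine isClosed_iInter fun a => ?_
    rw [Set.setOf_forall]
    refine isClosed_iInter fun c => ?_
    by_cases helig : a ∈ I.elig c
    · have : {w : A → C → ℝ | a ∉ I.elig c → w a c = 0} = Set.univ := by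
        ext w
        simp [helig]
      rw [this]
      exact isClosed_univ
    · have : {w : A → C → ℝ | a ∉ I.elig c → w a c = 0} = {w | w a c = 0} := by
        ext w
        simp [helig]
      rw [this]
      exact isClosed_eq (continuous_cell a c) continuous_const
  have h3 : IsClosed {w : A → C → ℝ | ∀ c, ∑ a, w a c ≤ (I.quota c : ℝ)} := by
    rw [Set.setOf_forall]
    exact isClosed_iInter fun c => isClosed_le
      (continuous_finset_sum _ fun a _ => continuous_cell a c) continuous_const
  have h4 : IsClosed {w : A → C → ℝ | ∀ a, ∑ c, w a c ≤ 1} := by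
    rw [Set.setOf_forall]
    exact isClosed_iInter fun a => isClosed_le
      (continuous_finset_sum _ fun c _ => continuous_cell a c) continuous_const
  have heq : {w : A → C → ℝ | I.Feasible w} =
      {w : A → C → ℝ | ∀ a c, 0 ≤ w a c} ∩
      ({w : A → C → ℝ | ∀ a c, a ∉ I.elig c → w a c = 0} ∩
      ({w : A → C → ℝ | ∀ c, ∑ a, w a c ≤ (I.quota c : ℝ)} ∩
       {w : A → C → ℝ | ∀ a, ∑ c, w a c ≤ 1})) := rfl
  rw [heq]
  exact h1.inter (h2.inter (h3.inter h4))

lemma feasible_bd (I : AllocInstance A C) {w : A → C → ℝ} (hF : I.Feasible w) :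
    ∀ a c, w a c ∈ Set.Icc (0:ℝ) 1 := by
  intro a c
  refine ⟨hF.1 a c, ?_⟩
  calc w a c ≤ tot w a := cell_le_tot hF.1 a c
  _ ≤ 1 := hF.2.2.2 a

/-- a valid allocation maximizes total mass among all feasible allocations. -/
lemma V_le_of_valid (I : AllocInstance A C) (hpre : I.TotalPreorder)
    (x : A → C → ℝ) (hval : I.Valid x) :
    ∀ z, I.Feasible z → ∑ a, tot z a ≤ ∑ a, tot x a := by
  set S : Set (A → C → ℝ) := {w | I.Feasible w} with hS
  have hcl : IsClosed S := feasible_closed I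
  have hbd : ∀ w ∈ S, ∀ a c, w a c ∈ Set.Icc (0:ℝ) 1 := fun w hw => feasible_bd I hw
  have hVcont : Continuous (fun w : A → C → ℝ => ∑ a, tot w a) :=
    continuous_finset_sum _ (fun a _ => continuous_tot a)
  obtain ⟨w₀, hw₀S, hw₀max⟩ := exists_argmax S ⟨x, hval.1⟩ hcl hbd _ hVcont
  set M : Set (A → C → ℝ) := S ∩ {w | ∑ a, tot w a = ∑ a, tot w₀ a} with hM
  have hMcl : IsClosed M := hcl.inter (isClosed_eq hVcont continuous_const)
  have hΦcont : Continuous (fun w : A → C → ℝ => ∑ a, min (tot w a) (tot x a)) :=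
    continuous_finset_sum _ (fun a _ => (continuous_tot a).min continuous_const)
  obtain ⟨w1, hw1M, hw1max⟩ := exists_argmax M ⟨w₀, hw₀S, rfl⟩ hMcl
    (fun w hw => hbd w hw.1) _ hΦcont
  obtain ⟨hFw1, hVw1⟩ := hw1M
  have hFw1' : I.Feasible w1 := hFw1
  have hdef : ∀ a, tot x a ≤ tot w1 a := by
    by_contra hcon
    push_neg at hcon
    obtain ⟨aT, haT⟩ := hcon
    set d : A → C → ℝ := fun a c => x a c - w1 a c with hd
    have hrowd : ∀ a, ∑ c, d a c = tot x a - tot w1 a := by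
      intro a
      simp only [hd, tot, Finset.sum_sub_distrib]
    have hcold : ∀ c, ∑ a, d a c = colS x c - colS w1 c := by
      intro c
      simp only [hd, colS, Finset.sum_sub_distrib]
    have haT' : 0 < ∑ c, d aT c := by rw [hrowd]; linarith
    obtain ⟨c₀, l, ce, hstart, hch, hterm⟩ := chain_dichotomy d aT haT'
    have hPcE : ∀ (a : A) (c : C), 0 < d a c → a ∈ I.elig c := by
      intro a c h
      simp only [hd] at h
      by_contra hne
      have h1 : x a c = 0 := hval.1.2.1 a c hne
      have := hFw1'.1 a c
      linarith
    have hNcE : ∀ (a : A) (c : C), d a c < 0 → a ∈ I.elig c := by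
      intro a c h
      simp only [hd] at h
      by_contra hne
      have h1 : w1 a c = 0 := hFw1'.2.1 a c hne
      have := hval.1.1 a c
      linarith
    have hnegw : ∀ p ∈ negCells c₀ l, 0 < w1 p.1 p.2 := by
      rintro ⟨a, c⟩ hp
      have h1 : d a c < 0 := chain_negCells hch hp
      simp only [hd] at h1
      have := hval.1.1 a c
      linarith
    have hgapaT : 0 < tot x aT - tot w1 aT := by linarith
    rcases hterm with hcolpos | ⟨a', ha'1, ha'2⟩
    · -- augment: contradiction with V-maximality of w₀
      set v : A → C → ℝ := cvec aT c₀ l with hv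
      obtain ⟨ε₀, hε₀, hshift⟩ := shift_nonneg w1 hFw1'.1 v ((l.length : ℝ) + 2)
        (cvec_lb aT c₀ l) (negCells c₀ l) hnegw (fun a c h => cvec_neg h)
      have hslack : colS w1 ce < colS x ce := by
        rw [hcold] at hcolpos
        linarith
      set ε : ℝ := min ε₀ (min (tot x aT - tot w1 aT) (colS x ce - colS w1 ce)) with hε
      have hεpos : 0 < ε := lt_min hε₀ (lt_min hgapaT (by linarith))
      have hεle : ε ≤ ε₀ := min_le_left _ _
      have hεrow : ε ≤ tot x aT - tot w1 aT :=
        le_trans (min_le_right _ _) (min_le_left _ _)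
      have hεcol : ε ≤ colS x ce - colS w1 ce :=
        le_trans (min_le_right _ _) (min_le_right _ _)
      set W : A → C → ℝ := fun a c => w1 a c + ε * v a c with hW
      have hrow : ∀ a, tot W a = tot w1 a + ε * (if a = aT then 1 else 0) := by
        intro a
        rw [hW, tot_shift, hv, cvec_row]
      have hcol : ∀ c, colS W c = colS w1 c + ε * (if c = ce then 1 else 0) := by
        intro c
        rw [hW, colS_shift, hv, cvec_col hch]
      have hW0 : ∀ a c, 0 ≤ W a c := fun a c => hshift ε hεpos hεle a c
      have hFW : I.Feasible W := by
        refine ⟨hW0, ?_, ?_, ?_⟩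
        · intro a c hne
          have hx0 : x a c = 0 := hval.1.2.1 a c hne
          have hw0 : w1 a c = 0 := hFw1'.2.1 a c hne
          have hv0 : v a c = 0 := by
            by_contra hvne
            rcases cvec_ne_zero hvne with ⟨rfl, rfl⟩ | h | h
            · exact hne (hPcE a c hstart)
            · exact hne (hPcE a c (chain_posCells hch h))
            · exact hne (hNcE a c (by
                have h2 : d a c < 0 := chain_negCells hch h
                exact h2))
          rw [hW]
          simp only [hw0, hv0, mul_zero, add_zero]
        · intro c
          have : (∑ a, W a c) = colS W c := rfl
          rw [this, hcol]
          by_cases hc : c = ce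
          · rw [if_pos hc, mul_one, hc]
            have hxce : colS x ce ≤ (I.quota ce : ℝ) := hval.1.2.2.1 ce
            linarith
          · rw [if_neg hc, mul_zero, add_zero]
            exact hFw1'.2.2.1 c
        · intro a
          have : (∑ c, W a c) = tot W a := rfl
          rw [this, hrow]
          by_cases ha : a = aT
          · rw [if_pos ha, mul_one, ha]
            have hxaT : tot x aT ≤ 1 := hval.1.2.2.2 aT
            linarith
          · rw [if_neg ha, mul_zero, add_zero]
            exact hFw1'.2.2.2 a
      have hVW : ∑ a, tot W a = (∑ a, tot w1 a) + ε := by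
        have : ∑ a, tot W a =
            ∑ a, (tot w1 a + ε * (if a = aT then 1 else 0)) := by
          apply Finset.sum_congr rfl
          intro a _
          exact hrow a
        rw [this, Finset.sum_add_distrib]
        congr 1
        rw [← Finset.mul_sum]
        simp
      have h1 : ∑ a, tot W a ≤ ∑ a, tot w₀ a := hw₀max W hFW
      rw [hVW, hVw1] at h1
      linarith
    · -- transfer: contradiction with Φ-maximality of w1
      have ha'w : 0 < w1 a' ce := by
        simp only [hd] at ha'1
        have := hval.1.1 a' ce
        linarith
      have ha'tot : tot x a' < tot w1 a' := by
        rw [hrowd] at ha'2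
        linarith
      have haTa' : aT ≠ a' := by
        intro h
        rw [h] at haT
        linarith
      set v : A → C → ℝ := fun a c => cvec aT c₀ l a c - eC a' ce a c with hv
      have hvlb : ∀ a c, -((l.length : ℝ) + 3) ≤ v a c := by
        intro a c
        have h1 := cvec_lb aT c₀ l a c
        have h2 : eC a' ce a c ≤ 1 := by unfold eC; split <;> norm_num
        simp only [hv]
        linarith
      obtain ⟨ε₀, hε₀, hshift⟩ := shift_nonneg w1 hFw1'.1 v ((l.length : ℝ) + 3)
        hvlb ((a', ce) :: negCells c₀ l)
        (by
          rintro p hp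
          rcases List.mem_cons.mp hp with rfl | hp
          · exact ha'w
          · exact hnegw p hp)
        (by
          intro a c h
          by_cases hac : (a, c) = (a', ce)
          · rw [hac]; exact List.mem_cons_self ..
          · right
            apply cvec_neg
            have he : eC a' ce a c = 0 := by
              unfold eC
              rw [if_neg]
              intro ⟨h1, h2⟩
              exact hac (by rw [h1, h2])
            simp only [hv, he, sub_zero] at h
            exact h)
      set ε : ℝ := min ε₀ (min (tot x aT - tot w1 aT) (tot w1 a' - tot x a')) with hε
      have hεpos : 0 < ε := lt_min hε₀ (lt_min hgapaT (by linarith))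
      have hεle : ε ≤ ε₀ := min_le_left _ _
      have hεrow : ε ≤ tot x aT - tot w1 aT :=
        le_trans (min_le_right _ _) (min_le_left _ _)
      have hεdon : ε ≤ tot w1 a' - tot x a' :=
        le_trans (min_le_right _ _) (min_le_right _ _)
      set W : A → C → ℝ := fun a c => w1 a c + ε * v a c with hW
      have hvrow : ∀ a, ∑ c, v a c =
          (if a = aT then 1 else 0) - (if a = a' then 1 else 0) := by
        intro a
        simp only [hv, Finset.sum_sub_distrib, cvec_row, eC_row]
      have hvcol : ∀ c, ∑ a, v a c = 0 := by
        intro c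
        simp only [hv, Finset.sum_sub_distrib, cvec_col hch, eC_col]
        ring
      have hrow : ∀ a, tot W a = tot w1 a +
          ε * ((if a = aT then 1 else 0) - (if a = a' then 1 else 0)) := by
        intro a
        rw [hW, tot_shift, hvrow]
      have hcol : ∀ c, colS W c = colS w1 c := by
        intro c
        rw [hW, colS_shift, hvcol, mul_zero, add_zero]
      have hW0 : ∀ a c, 0 ≤ W a c := fun a c => hshift ε hεpos hεle a c
      have hFW : I.Feasible W := by
        refine ⟨hW0, ?_, ?_, ?_⟩
        · intro a c hne
          have hx0 : x a c = 0 := hval.1.2.1 a c hne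
          have hw0 : w1 a c = 0 := hFw1'.2.1 a c hne
          have hv0 : v a c = 0 := by
            have hcv : cvec aT c₀ l a c = 0 := by
              by_contra hvne
              rcases cvec_ne_zero hvne with ⟨rfl, rfl⟩ | h | h
              · exact hne (hPcE a c hstart)
              · exact hne (hPcE a c (chain_posCells hch h))
              · exact hne (hNcE a c (chain_negCells hch h))
            have he : eC a' ce a c = 0 := by
              by_contra he
              obtain ⟨rfl, rfl⟩ := eC_ne_zero he
              linarith [ha'w]
            simp only [hv, hcv, he, sub_zero]
          rw [hW]
          simp only [hw0, hv0, mul_zero, add_zero]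
        · intro c
          have : (∑ a, W a c) = colS W c := rfl
          rw [this, hcol]
          exact hFw1'.2.2.1 c
        · intro a
          have : (∑ c, W a c) = tot W a := rfl
          rw [this, hrow]
          by_cases ha : a = aT
          · have ha'' : ¬ a = a' := by rw [ha]; exact haTa'
            rw [if_pos ha, if_neg ha'', ha]
            have hxaT : tot x aT ≤ 1 := hval.1.2.2.2 aT
            linarith
          · rw [if_neg ha]
            by_cases ha2 : a = a'
            · rw [if_pos ha2]
              have h1 : tot w1 a ≤ 1 := hFw1'.2.2.2 a
              have h2 : ε * ((0:ℝ) - 1) = -ε := by ring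
              rw [h2]
              linarith
            · rw [if_neg ha2]
              have h2 : ε * ((0:ℝ) - 0) = 0 := by ring
              rw [h2, add_zero]
              exact hFw1'.2.2.2 a
      have hVW : ∑ a, tot W a = ∑ a, tot w1 a := by
        rw [Finset.sum_congr rfl (fun a _ => hrow a), Finset.sum_add_distrib]
        have hz : ∑ a, ε * ((if a = aT then (1:ℝ) else 0) -
            (if a = a' then 1 else 0)) = 0 := by
          rw [← Finset.mul_sum, Finset.sum_sub_distrib]
          simp
        rw [hz, add_zero]
      have hVeq1 : (∑ a, tot w1 a) = ∑ a, tot w₀ a := hVw1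
      have hWM : W ∈ M := ⟨hFW, by
        rw [Set.mem_setOf_eq, hVW]
        exact hVeq1⟩
      have hgap2 : tot w1 aT + ε ≤ tot x aT := by linarith
      have hgap3 : tot x a' ≤ tot w1 a' - ε := by linarith
      have hΦterm : ∀ a, min (tot W a) (tot x a) =
          min (tot w1 a) (tot x a) + (if a = aT then ε else 0) := by
        intro a
        by_cases ha : a = aT
        · have ha'' : ¬ a = a' := by rw [ha]; exact haTa'
          rw [if_pos ha, hrow, if_pos ha, if_neg ha'', ha]
          have e1 : tot w1 aT + ε * ((1:ℝ) - 0) = tot w1 aT + ε := by ring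
          rw [e1, min_eq_left hgap2, min_eq_left (le_of_lt haT)]
        · rw [if_neg ha, add_zero, hrow, if_neg ha]
          by_cases ha2 : a = a'
          · rw [if_pos ha2]
            have e1 : tot w1 a + ε * ((0:ℝ) - 1) = tot w1 a - ε := by ring
            rw [e1, ha2]
            rw [min_eq_right hgap3, min_eq_right (le_of_lt ha'tot)]
          · rw [if_neg ha2]
            have e1 : tot w1 a + ε * ((0:ℝ) - 0) = tot w1 a := by ring
            rw [e1]
      have hΦsum : ∑ a, min (tot W a) (tot x a) =
          (∑ a, min (tot w1 a) (tot x a)) + ε := by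
        rw [Finset.sum_congr rfl (fun a _ => hΦterm a), Finset.sum_add_distrib]
        congr 1
        simp
      have := hw1max W hWM
      rw [hΦsum] at this
      linarith
  -- conclude
  intro z hFz
  by_contra hVz
  push_neg at hVz
  have hVw₀ : ∑ a, tot x a < ∑ a, tot w₀ a := lt_of_lt_of_le hVz (hw₀max z hFz)
  have hVeq : (∑ a, tot w1 a) = ∑ a, tot w₀ a := hVw1
  have hstrict : ∃ b, tot x b < tot w1 b := by
    by_contra hno
    push_neg at hno
    have : ∑ a, tot w1 a ≤ ∑ a, tot x a :=
      Finset.sum_le_sum (fun a _ => hno a)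
    linarith
  obtain ⟨b, hb⟩ := hstrict
  exact no_feasible_dominator I hpre x hval w1 hFw1' hdef b hb



/-- membership in the pinned polytope `K`. -/
def memK (I : AllocInstance A C) (x w : A → C → ℝ) : Prop :=
  (∀ a c, 0 ≤ w a c) ∧ (∀ a c, x a c = 0 → w a c = 0) ∧
  (∀ c, colS w c ≤ (I.quota c : ℝ)) ∧ (∀ a, tot w a ≤ 1) ∧
  (∀ a, tot x a = 1 → tot w a = 1)

lemma memK_closed (I : AllocInstance A C) (x : A → C → ℝ) :
    IsClosed {w : A → C → ℝ | memK I x w} := by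
  have h1 : IsClosed {w : A → C → ℝ | ∀ a c, 0 ≤ w a c} := by
    rw [Set.setOf_forall]
    refine isClosed_iInter fun a => ?_
    rw [Set.setOf_forall]
    exact isClosed_iInter fun c => isClosed_le continuous_const (continuous_cell a c)
  have h2 : IsClosed {w : A → C → ℝ | ∀ a c, x a c = 0 → w a c = 0} := by
    rw [Set.setOf_forall]
    refine isClosed_iInter fun a => ?_
    rw [Set.setOf_forall]
    refine isClosed_iInter fun c => ?_
    by_cases hx : x a c = 0
    · have : {w : A → C → ℝ | x a c = 0 → w a c = 0} = {w | w a c = 0} := by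
        ext w; simp [hx]
      rw [this]
      exact isClosed_eq (continuous_cell a c) continuous_const
    · have : {w : A → C → ℝ | x a c = 0 → w a c = 0} = Set.univ := by
        ext w; simp [hx]
      rw [this]
      exact isClosed_univ
  have h3 : IsClosed {w : A → C → ℝ | ∀ c, colS w c ≤ (I.quota c : ℝ)} := by
    rw [Set.setOf_forall]
    exact isClosed_iInter fun c => isClosed_le
      (continuous_finset_sum _ fun a _ => continuous_cell a c) continuous_const
  have h4 : IsClosed {w : A → C → ℝ | ∀ a, tot w a ≤ 1} := by
    rw [Set.setOf_forall]
    exact isClosed_iInter fun a => isClosed_le (continuous_tot a) continuous_const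
  have h5 : IsClosed {w : A → C → ℝ | ∀ a, tot x a = 1 → tot w a = 1} := by
    rw [Set.setOf_forall]
    refine isClosed_iInter fun a => ?_
    by_cases hx : tot x a = 1
    · have : {w : A → C → ℝ | tot x a = 1 → tot w a = 1} = {w | tot w a = 1} := by
        ext w; simp [hx]
      rw [this]
      exact isClosed_eq (continuous_tot a) continuous_const
    · have : {w : A → C → ℝ | tot x a = 1 → tot w a = 1} = Set.univ := by
        ext w; simp [hx]
      rw [this]
      exact isClosed_univ
  have heq : {w : A → C → ℝ | memK I x w} =
      {w : A → C → ℝ | ∀ a c, 0 ≤ w a c} ∩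
      ({w : A → C → ℝ | ∀ a c, x a c = 0 → w a c = 0} ∩
      ({w : A → C → ℝ | ∀ c, colS w c ≤ (I.quota c : ℝ)} ∩
      ({w : A → C → ℝ | ∀ a, tot w a ≤ 1} ∩
       {w : A → C → ℝ | ∀ a, tot x a = 1 → tot w a = 1}))) := rfl
  rw [heq]
  exact h1.inter (h2.inter (h3.inter (h4.inter h5)))

lemma memK_bd (I : AllocInstance A C) (x : A → C → ℝ) {w : A → C → ℝ}
    (hw : memK I x w) : ∀ a c, w a c ∈ Set.Icc (0:ℝ) 1 := by
  intro a c
  refine ⟨hw.1 a c, ?_⟩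
  calc w a c ≤ tot w a := cell_le_tot hw.1 a c
  _ ≤ 1 := hw.2.2.2.1 a

lemma x_memK (I : AllocInstance A C) (x : A → C → ℝ) (hFx : I.Feasible x) :
    memK I x x :=
  ⟨hFx.1, fun _ _ h => h, fun c => hFx.2.2.1 c, fun a => hFx.2.2.2 a, fun _ h => h⟩

/-- existence of an element of `K` with `astar` fully allocated. -/
lemma exists_full_astar (I : AllocInstance A C) (x : A → C → ℝ) (hFx : I.Feasible x)
    (astar : A) (h1 : 0 < tot x astar) (h2 : tot x astar < 1) :
    ∃ w, memK I x w ∧ tot w astar = 1 := by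
  set S : Set (A → C → ℝ) := {w | memK I x w} with hS
  obtain ⟨w₂, hw₂S, hmax⟩ := exists_argmax S ⟨x, x_memK I x hFx⟩ (memK_closed I x)
    (fun w hw => memK_bd I x hw) _ (continuous_tot astar)
  have hw₂K : memK I x w₂ := hw₂S
  refine ⟨w₂, hw₂K, ?_⟩
  have hts : tot x astar ≤ tot w₂ astar := hmax x (x_memK I x hFx)
  have htle : tot w₂ astar ≤ 1 := hw₂K.2.2.2.1 astar
  by_contra htne
  have htlt : tot w₂ astar < 1 := lt_of_le_of_ne htle htne
  set Nc : A → C → Prop := fun a c => 0 < w₂ a c with hNc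
  set Pc : A → C → Prop := fun a c => 0 < x a c with hPc
  set R : Set C := {c | ∃ c₀ l, 0 < x astar c₀ ∧ Chain Nc Pc c₀ l c} with hR
  have hsuppx : ∀ a c, 0 < w₂ a c → 0 < x a c := by
    intro a c h
    rcases lt_or_eq_of_le (hFx.1 a c) with h1' | h1'
    · exact h1'
    · exfalso
      have := hw₂K.2.1 a c h1'.symm
      linarith
  -- (i) every reachable column is tight
  have htight : ∀ c ∈ R, colS w₂ c = (I.quota c : ℝ) := by
    rintro c ⟨c₀, l, hstart, hch⟩
    refine le_antisymm (hw₂K.2.2.1 c) ?_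
    by_contra hslack
    push_neg at hslack
    have hnegw : ∀ p ∈ negCells c₀ l, 0 < w₂ p.1 p.2 := by
      rintro ⟨a, c'⟩ hp
      exact chain_negCells hch hp
    set v : A → C → ℝ := cvec astar c₀ l with hv
    obtain ⟨ε₀, hε₀, hshift⟩ := shift_nonneg w₂ hw₂K.1 v ((l.length : ℝ) + 2)
      (cvec_lb astar c₀ l) (negCells c₀ l) hnegw (fun a c' h => cvec_neg h)
    set ε : ℝ := min ε₀ (min (1 - tot w₂ astar) ((I.quota c : ℝ) - colS w₂ c)) with hε
    have hεpos : 0 < ε := lt_min hε₀ (lt_min (by linarith) (by linarith))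
    have hεle : ε ≤ ε₀ := min_le_left _ _
    have hεrow : ε ≤ 1 - tot w₂ astar := le_trans (min_le_right _ _) (min_le_left _ _)
    have hεcol : ε ≤ (I.quota c : ℝ) - colS w₂ c :=
      le_trans (min_le_right _ _) (min_le_right _ _)
    set W : A → C → ℝ := fun a c' => w₂ a c' + ε * v a c' with hW
    have hrow : ∀ a, tot W a = tot w₂ a + ε * (if a = astar then 1 else 0) := by
      intro a
      rw [hW, tot_shift, hv, cvec_row]
    have hcol : ∀ c', colS W c' = colS w₂ c' + ε * (if c' = c then 1 else 0) := by
      intro c'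
      rw [hW, colS_shift, hv, cvec_col hch]
    have hWK : memK I x W := by
      refine ⟨fun a c' => hshift ε hεpos hεle a c', ?_, ?_, ?_, ?_⟩
      · intro a c' hx0
        have hw0 : w₂ a c' = 0 := hw₂K.2.1 a c' hx0
        have hv0 : v a c' = 0 := by
          by_contra hvne
          rcases cvec_ne_zero hvne with ⟨rfl, rfl⟩ | h | h
          · rw [hx0] at hstart; linarith
          · have h2 : 0 < x a c' := chain_posCells hch h
            linarith
          · have h2 : 0 < w₂ a c' := chain_negCells hch h
            have := hsuppx a c' h2
            linarith
        rw [hW]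
        simp only [hw0, hv0, mul_zero, add_zero]
      · intro c'
        rw [hcol]
        by_cases hc : c' = c
        · rw [if_pos hc, mul_one, hc]
          linarith
        · rw [if_neg hc, mul_zero, add_zero]
          exact hw₂K.2.2.1 c'
      · intro a
        rw [hrow]
        by_cases ha : a = astar
        · rw [if_pos ha, mul_one, ha]
          linarith
        · rw [if_neg ha, mul_zero, add_zero]
          exact hw₂K.2.2.2.1 a
      · intro a hpin
        have ha : a ≠ astar := by
          intro h
          rw [h] at hpin
          linarith
        rw [hrow, if_neg ha, mul_zero, add_zero]
        exact hw₂K.2.2.2.2 a hpin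
    have := hmax W hWK
    rw [hrow, if_pos rfl, mul_one] at this
    linarith
  -- (ii) every supporter of a reachable column is pinned or astar
  have hdonor : ∀ c ∈ R, ∀ a, 0 < w₂ a c → tot x a = 1 ∨ a = astar := by
    rintro c ⟨c₀, l, hstart, hch⟩ a₁ ha₁
    by_contra hcon
    push_neg at hcon
    obtain ⟨hpin1, hne1⟩ := hcon
    have hnegw : ∀ p ∈ negCells c₀ l, 0 < w₂ p.1 p.2 := by
      rintro ⟨a, c'⟩ hp
      exact chain_negCells hch hp
    set v : A → C → ℝ := fun a c' => cvec astar c₀ l a c' - eC a₁ c a c' with hv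
    have hvlb : ∀ a c', -((l.length : ℝ) + 3) ≤ v a c' := by
      intro a c'
      have hA := cvec_lb astar c₀ l a c'
      have hB : eC a₁ c a c' ≤ 1 := by unfold eC; split <;> norm_num
      simp only [hv]
      linarith
    obtain ⟨ε₀, hε₀, hshift⟩ := shift_nonneg w₂ hw₂K.1 v ((l.length : ℝ) + 3)
      hvlb ((a₁, c) :: negCells c₀ l)
      (by
        rintro p hp
        rcases List.mem_cons.mp hp with rfl | hp
        · exact ha₁
        · exact hnegw p hp)
      (by
        intro a c' h
        by_cases hac : (a, c') = (a₁, c)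
        · rw [hac]; exact List.mem_cons_self ..
        · right
          apply cvec_neg
          have he : eC a₁ c a c' = 0 := by
            unfold eC
            rw [if_neg]
            intro ⟨hh1, hh2⟩
            exact hac (by rw [hh1, hh2])
          simp only [hv, he, sub_zero] at h
          exact h)
    set ε : ℝ := min ε₀ (1 - tot w₂ astar) with hε
    have hεpos : 0 < ε := lt_min hε₀ (by linarith)
    have hεle : ε ≤ ε₀ := min_le_left _ _
    have hεrow : ε ≤ 1 - tot w₂ astar := min_le_right _ _
    set W : A → C → ℝ := fun a c' => w₂ a c' + ε * v a c' with hW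
    have hvrow : ∀ a, ∑ c', v a c' =
        (if a = astar then 1 else 0) - (if a = a₁ then 1 else 0) := by
      intro a
      simp only [hv, Finset.sum_sub_distrib, cvec_row, eC_row]
    have hvcol : ∀ c', ∑ a, v a c' = 0 := by
      intro c'
      simp only [hv, Finset.sum_sub_distrib, cvec_col hch, eC_col]
      ring
    have hrow : ∀ a, tot W a = tot w₂ a +
        ε * ((if a = astar then 1 else 0) - (if a = a₁ then 1 else 0)) := by
      intro a
      rw [hW, tot_shift, hvrow]
    have hcol : ∀ c', colS W c' = colS w₂ c' := by
      intro c'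
      rw [hW, colS_shift, hvcol, mul_zero, add_zero]
    have hastar_ne : astar ≠ a₁ := fun h => hne1 h.symm
    have hWK : memK I x W := by
      refine ⟨fun a c' => hshift ε hεpos hεle a c', ?_, ?_, ?_, ?_⟩
      · intro a c' hx0
        have hw0 : w₂ a c' = 0 := hw₂K.2.1 a c' hx0
        have hv0 : v a c' = 0 := by
          have hcv : cvec astar c₀ l a c' = 0 := by
            by_contra hvne
            rcases cvec_ne_zero hvne with ⟨rfl, rfl⟩ | h | h
            · rw [hx0] at hstart; linarith
            · have h2 : 0 < x a c' := chain_posCells hch h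
              linarith
            · have h2 : 0 < w₂ a c' := chain_negCells hch h
              have := hsuppx a c' h2
              linarith
          have he : eC a₁ c a c' = 0 := by
            by_contra he
            obtain ⟨rfl, rfl⟩ := eC_ne_zero he
            have := hsuppx a c' ha₁
            linarith
          simp only [hv, hcv, he, sub_zero]
        rw [hW]
        simp only [hw0, hv0, mul_zero, add_zero]
      · intro c'
        rw [hcol]
        exact hw₂K.2.2.1 c'
      · intro a
        rw [hrow]
        by_cases ha : a = astar
        · have ha'' : ¬ a = a₁ := by rw [ha]; exact hastar_ne
          rw [if_pos ha, if_neg ha'', ha]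
          have e1 : tot w₂ astar + ε * ((1:ℝ) - 0) = tot w₂ astar + ε := by ring
          rw [e1]
          linarith
        · rw [if_neg ha]
          by_cases ha2 : a = a₁
          · rw [if_pos ha2]
            have e1 : tot w₂ a + ε * ((0:ℝ) - 1) = tot w₂ a - ε := by ring
            rw [e1]
            have := hw₂K.2.2.2.1 a
            linarith
          · rw [if_neg ha2]
            have e1 : tot w₂ a + ε * ((0:ℝ) - 0) = tot w₂ a := by ring
            rw [e1]
            exact hw₂K.2.2.2.1 a
      · intro a hpin
        have ha : a ≠ astar := by
          intro h
          rw [h] at hpin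
          linarith
        have ha2 : a ≠ a₁ := by
          intro h
          rw [h] at hpin
          exact hpin1 hpin
        rw [hrow, if_neg ha, if_neg ha2]
        have e1 : tot w₂ a + ε * ((0:ℝ) - 0) = tot w₂ a := by ring
        rw [e1]
        exact hw₂K.2.2.2.2 a hpin
    have := hmax W hWK
    rw [hrow, if_pos rfl, if_neg hastar_ne, ] at this
    have e1 : tot w₂ astar + ε * ((1:ℝ) - 0) = tot w₂ astar + ε := by ring
    rw [e1] at this
    linarith
  -- the count
  set Rf : Finset C := Finset.univ.filter (· ∈ R) with hRf
  have hmem_Rf : ∀ c, c ∈ Rf ↔ c ∈ R := by intro c; simp [hRf]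
  have hclosure : ∀ a, (∃ c ∈ Rf, 0 < w₂ a c) → ∀ c', 0 < x a c' → c' ∈ Rf := by
    rintro a ⟨c, hc, hac⟩ c' hxc'
    obtain ⟨c₀, l, hstart, hch⟩ := (hmem_Rf c).mp hc
    exact (hmem_Rf c').mpr ⟨c₀, l ++ [(a, c')], hstart, chain_append hch hac hxc'⟩
  set MS : Finset A := Finset.univ.filter (fun a => ∃ c ∈ Rf, 0 < w₂ a c) with hMS
  have hmem_MS : ∀ a, a ∈ MS ↔ ∃ c ∈ Rf, 0 < w₂ a c := by intro a; simp [hMS]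
  have hMSrow : ∀ a ∈ MS, ∑ c ∈ Rf, w₂ a c = tot w₂ a := by
    intro a ha
    have hout : ∀ c ∈ Rfᶜ, w₂ a c = 0 := by
      intro c hc
      rcases lt_or_eq_of_le (hw₂K.1 a c) with h | h
      · exfalso
        have hx := hsuppx a c h
        have := hclosure a ((hmem_MS a).mp ha) c hx
        simp only [Finset.mem_compl] at hc
        exact hc this
      · exact h.symm
    have hsplit : ∑ c ∈ Rf, w₂ a c + ∑ c ∈ Rfᶜ, w₂ a c = ∑ c, w₂ a c :=
      Finset.sum_add_sum_compl Rf _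
    have : ∑ c ∈ Rfᶜ, w₂ a c = 0 := Finset.sum_eq_zero hout
    unfold tot
    linarith
  have hnotMS : ∀ a ∉ MS, ∑ c ∈ Rf, w₂ a c = 0 := by
    intro a ha
    apply Finset.sum_eq_zero
    intro c hc
    rcases lt_or_eq_of_le (hw₂K.1 a c) with h | h
    · exact absurd ((hmem_MS a).mpr ⟨c, hc, h⟩) ha
    · exact h.symm
  have hastarMS : astar ∈ MS := by
    have : 0 < tot w₂ astar := by linarith
    obtain ⟨c, hc⟩ := pos_cell_of_tot hw₂K.1 this
    have hx := hsuppx astar c hc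
    have hcR : c ∈ Rf := (hmem_Rf c).mpr ⟨c, [], hx, rfl⟩
    exact (hmem_MS astar).mpr ⟨c, hcR, hc⟩
  have hsum1 : ∑ c ∈ Rf, (I.quota c : ℝ) = ∑ c ∈ Rf, colS w₂ c := by
    apply Finset.sum_congr rfl
    intro c hc
    exact (htight c ((hmem_Rf c).mp hc)).symm
  have hsum2 : ∑ c ∈ Rf, colS w₂ c = ∑ a ∈ MS, tot w₂ a := by
    unfold colS
    rw [Finset.sum_comm]
    rw [← Finset.sum_filter_add_sum_filter_not Finset.univ (fun a => a ∈ MS)]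
    have e1 : Finset.univ.filter (fun a => a ∈ MS) = MS := by
      ext a; simp
    have e2 : ∑ a ∈ Finset.univ.filter (fun a => ¬ a ∈ MS), ∑ c ∈ Rf, w₂ a c = 0 := by
      apply Finset.sum_eq_zero
      intro a ha
      simp only [Finset.mem_filter] at ha
      exact hnotMS a ha.2
    rw [e1, e2, add_zero]
    exact Finset.sum_congr rfl (fun a ha => hMSrow a ha)
  have hsum3 : ∑ a ∈ MS, tot w₂ a =
      (((MS.erase astar).card : ℝ)) + tot w₂ astar := by
    rw [← Finset.sum_erase_add MS _ hastarMS]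
    congr 1
    have : ∀ a ∈ MS.erase astar, tot w₂ a = 1 := by
      intro a ha
      have hane : a ≠ astar := Finset.ne_of_mem_erase ha
      have haMS : a ∈ MS := Finset.mem_of_mem_erase ha
      obtain ⟨c, hc, hac⟩ := (hmem_MS a).mp haMS
      rcases hdonor c ((hmem_Rf c).mp hc) a hac with hpin | heq
      · exact hw₂K.2.2.2.2 a hpin
      · exact absurd heq hane
    rw [Finset.sum_congr rfl this]
    simp
  have hcast : ∑ c ∈ Rf, (I.quota c : ℝ) = ((∑ c ∈ Rf, I.quota c : ℕ) : ℝ) := by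
    push_cast
    rfl
  set N : ℕ := ∑ c ∈ Rf, I.quota c with hN
  set k : ℕ := (MS.erase astar).card with hk
  have hkey : (N : ℝ) = (k : ℝ) + tot w₂ astar := by
    rw [← hcast, hsum1, hsum2, hsum3]
  have hklt : (k : ℝ) < (N : ℝ) := by
    rw [hkey]
    linarith
  have hNlt : (N : ℝ) < (k : ℝ) + 1 := by
    rw [hkey]
    linarith
  have h5 : k < N := by exact_mod_cast hklt
  have h6 : N < k + 1 := by exact_mod_cast hNlt
  omega



/-- the main construction: an element of `K` with `astar` full and总 mass at least
that of `x`. -/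
lemma exists_final_y (I : AllocInstance A C) (x : A → C → ℝ) (hFx : I.Feasible x)
    (astar : A) (h1 : 0 < tot x astar) (h2 : tot x astar < 1) :
    ∃ y, memK I x y ∧ tot y astar = 1 ∧ (∑ a, tot x a) ≤ ∑ a, tot y a := by
  obtain ⟨w₁, hw₁K, hw₁full⟩ := exists_full_astar I x hFx astar h1 h2
  set S : Set (A → C → ℝ) := {w | memK I x w ∧ tot w astar = 1} with hS
  have hScl : IsClosed S := by
    have : S = {w | memK I x w} ∩ {w | tot w astar = 1} := rfl
    rw [this]
    exact (memK_closed I x).inter (isClosed_eq (continuous_tot astar) continuous_const)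
  have hVcont : Continuous (fun w : A → C → ℝ => ∑ a, tot w a) :=
    continuous_finset_sum _ (fun a _ => continuous_tot a)
  obtain ⟨y, hyS, hymax⟩ := exists_argmax S ⟨w₁, hw₁K, hw₁full⟩ hScl
    (fun w hw => memK_bd I x hw.1) _ hVcont
  obtain ⟨hyK, hyfull⟩ := hyS
  refine ⟨y, hyK, hyfull, ?_⟩
  have hsuppx : ∀ a c, 0 < y a c → 0 < x a c := by
    intro a c h
    rcases lt_or_eq_of_le (hFx.1 a c) with h1' | h1'
    · exact h1'
    · exfalso
      have := hyK.2.1 a c h1'.symm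
      linarith
  by_cases hhun : ∃ p, tot y p < tot x p
  · -- there are hungry agents: use the counting argument
    set Nc : A → C → Prop := fun a c => 0 < y a c with hNc
    set Pc : A → C → Prop := fun a c => 0 < x a c with hPc
    set R : Set C := {c | ∃ p, tot y p < tot x p ∧
      ∃ c₀ l, 0 < x p c₀ ∧ Chain Nc Pc c₀ l c} with hR
    -- (s1): every reachable column is tight
    have htight : ∀ c ∈ R, colS y c = (I.quota c : ℝ) := by
      rintro c ⟨p, hp, c₀, l, hstart, hch⟩
      refine le_antisymm (hyK.2.2.1 c) ?_
      by_contra hslack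
      push_neg at hslack
      have hpne1 : tot x p ≤ 1 := hFx.2.2.2 p
      have hpnestar : p ≠ astar := by
        intro h
        rw [h] at hp
        rw [hyfull] at hp
        linarith
      have hnegw : ∀ q ∈ negCells c₀ l, 0 < y q.1 q.2 := by
        rintro ⟨a, c'⟩ hq
        exact chain_negCells hch hq
      set v : A → C → ℝ := cvec p c₀ l with hv
      obtain ⟨ε₀, hε₀, hshift⟩ := shift_nonneg y hyK.1 v ((l.length : ℝ) + 2)
        (cvec_lb p c₀ l) (negCells c₀ l) hnegw (fun a c' h => cvec_neg h)
      set ε : ℝ := min ε₀ (min (tot x p - tot y p) ((I.quota c : ℝ) - colS y c)) with hε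
      have hεpos : 0 < ε := lt_min hε₀ (lt_min (by linarith) (by linarith))
      have hεle : ε ≤ ε₀ := min_le_left _ _
      have hεrow : ε ≤ tot x p - tot y p := le_trans (min_le_right _ _) (min_le_left _ _)
      have hεcol : ε ≤ (I.quota c : ℝ) - colS y c :=
        le_trans (min_le_right _ _) (min_le_right _ _)
      set W : A → C → ℝ := fun a c' => y a c' + ε * v a c' with hW
      have hrow : ∀ a, tot W a = tot y a + ε * (if a = p then 1 else 0) := by
        intro a
        rw [hW, tot_shift, hv, cvec_row]
      have hcol : ∀ c', colS W c' = colS y c' + ε * (if c' = c then 1 else 0) := by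
        intro c'
        rw [hW, colS_shift, hv, cvec_col hch]
      have hWS : W ∈ S := by
        constructor
        · refine ⟨fun a c' => hshift ε hεpos hεle a c', ?_, ?_, ?_, ?_⟩
          · intro a c' hx0
            have hw0 : y a c' = 0 := hyK.2.1 a c' hx0
            have hv0 : v a c' = 0 := by
              by_contra hvne
              rcases cvec_ne_zero hvne with ⟨rfl, rfl⟩ | h | h
              · rw [hx0] at hstart; linarith
              · have h2' : 0 < x a c' := chain_posCells hch h
                linarith
              · have h2' : 0 < y a c' := chain_negCells hch h
                have := hsuppx a c' h2'
                linarith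
            rw [hW]
            simp only [hw0, hv0, mul_zero, add_zero]
          · intro c'
            rw [hcol]
            by_cases hc : c' = c
            · rw [if_pos hc, mul_one, hc]
              linarith
            · rw [if_neg hc, mul_zero, add_zero]
              exact hyK.2.2.1 c'
          · intro a
            rw [hrow]
            by_cases ha : a = p
            · rw [if_pos ha, mul_one, ha]
              linarith
            · rw [if_neg ha, mul_zero, add_zero]
              exact hyK.2.2.2.1 a
          · intro a hpin
            have ha : a ≠ p := by
              intro h
              rw [h] at hpin
              have h3 := hyK.2.2.2.2 p hpin
              rw [hpin] at hp
              linarith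
            rw [hrow, if_neg ha, mul_zero, add_zero]
            exact hyK.2.2.2.2 a hpin
        · show tot W astar = 1
          rw [hrow, if_neg (Ne.symm hpnestar), mul_zero, add_zero]
          exact hyfull
      have hVW : ∑ a, tot W a = (∑ a, tot y a) + ε := by
        rw [Finset.sum_congr rfl (fun a _ => hrow a), Finset.sum_add_distrib]
        congr 1
        rw [← Finset.mul_sum]
        simp
      have := hymax W hWS
      rw [hVW] at this
      linarith
    -- counting
    set Rf : Finset C := Finset.univ.filter (· ∈ R) with hRf
    have hmem_Rf : ∀ c, c ∈ Rf ↔ c ∈ R := by intro c; simp [hRf]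
    set MS : Finset A := Finset.univ.filter (fun a => ∃ c ∈ Rf, 0 < y a c) with hMS
    have hmem_MS : ∀ a, a ∈ MS ↔ ∃ c ∈ Rf, 0 < y a c := by intro a; simp [hMS]
    set Hg : Finset A := Finset.univ.filter (fun p => tot y p < tot x p) with hHg
    have hmem_Hg : ∀ a, a ∈ Hg ↔ tot y a < tot x a := by intro a; simp [hHg]
    have hclosure : ∀ a, (∃ c ∈ Rf, 0 < y a c) → ∀ c', 0 < x a c' → c' ∈ Rf := by
      rintro a ⟨c, hc, hac⟩ c' hxc'
      obtain ⟨p, hp, c₀, l, hstart, hch⟩ := (hmem_Rf c).mp hc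
      exact (hmem_Rf c').mpr ⟨p, hp, c₀, l ++ [(a, c')], hstart, chain_append hch hac hxc'⟩
    have hHgstart : ∀ p ∈ Hg, ∀ c', 0 < x p c' → c' ∈ Rf := by
      intro p hp c' hx
      exact (hmem_Rf c').mpr ⟨p, (hmem_Hg p).mp hp, c', [], hx, rfl⟩
    set MSH : Finset A := MS ∪ Hg with hMSH
    have hMSrow : ∀ a ∈ MS, ∑ c ∈ Rf, y a c = tot y a := by
      intro a ha
      have hout : ∀ c ∈ Rfᶜ, y a c = 0 := by
        intro c hc
        rcases lt_or_eq_of_le (hyK.1 a c) with h | h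
        · exfalso
          have hx := hsuppx a c h
          have := hclosure a ((hmem_MS a).mp ha) c hx
          simp only [Finset.mem_compl] at hc
          exact hc this
        · exact h.symm
      have hsplit : ∑ c ∈ Rf, y a c + ∑ c ∈ Rfᶜ, y a c = ∑ c, y a c :=
        Finset.sum_add_sum_compl Rf _
      have hz : ∑ c ∈ Rfᶜ, y a c = 0 := Finset.sum_eq_zero hout
      unfold tot
      linarith
    have hnotMS : ∀ a ∉ MS, ∑ c ∈ Rf, y a c = 0 := by
      intro a ha
      apply Finset.sum_eq_zero
      intro c hc
      rcases lt_or_eq_of_le (hyK.1 a c) with h | h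
      · exact absurd ((hmem_MS a).mpr ⟨c, hc, h⟩) ha
      · exact h.symm
    have hMSHx : ∀ a ∈ MSH, ∑ c ∈ Rf, x a c = tot x a := by
      intro a ha
      have hin : ∀ c', 0 < x a c' → c' ∈ Rf := by
        rcases Finset.mem_union.mp ha with h | h
        · exact hclosure a ((hmem_MS a).mp h)
        · exact hHgstart a h
      have hout : ∀ c ∈ Rfᶜ, x a c = 0 := by
        intro c hc
        rcases lt_or_eq_of_le (hFx.1 a c) with h | h
        · exfalso
          simp only [Finset.mem_compl] at hc
          exact hc (hin c h)
        · exact h.symm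
      have hsplit : ∑ c ∈ Rf, x a c + ∑ c ∈ Rfᶜ, x a c = ∑ c, x a c :=
        Finset.sum_add_sum_compl Rf _
      have hz : ∑ c ∈ Rfᶜ, x a c = 0 := Finset.sum_eq_zero hout
      unfold tot
      linarith
    have hHgnoty : ∀ p ∈ MSH, p ∉ MS → tot y p = 0 := by
      intro p hpMSH hpMS
      have hpHg : p ∈ Hg := by
        rcases Finset.mem_union.mp hpMSH with h | h
        · exact absurd h hpMS
        · exact h
      have hcells : ∀ c, y p c = 0 := by
        intro c
        rcases lt_or_eq_of_le (hyK.1 p c) with h | h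
        · exfalso
          have hx := hsuppx p c h
          have hcR : c ∈ Rf := hHgstart p hpHg c hx
          exact hpMS ((hmem_MS p).mpr ⟨c, hcR, h⟩)
        · exact h.symm
      unfold tot
      exact Finset.sum_eq_zero (fun c _ => hcells c)
    have hsum1 : ∑ c ∈ Rf, (I.quota c : ℝ) = ∑ c ∈ Rf, colS y c :=
      Finset.sum_congr rfl (fun c hc => (htight c ((hmem_Rf c).mp hc)).symm)
    have hsum2 : ∑ c ∈ Rf, colS y c = ∑ a ∈ MS, tot y a := by
      unfold colS
      rw [Finset.sum_comm]
      rw [← Finset.sum_filter_add_sum_filter_not Finset.univ (fun a => a ∈ MS)]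
      have e1 : Finset.univ.filter (fun a => a ∈ MS) = MS := by ext a; simp
      have e2 : ∑ a ∈ Finset.univ.filter (fun a => ¬ a ∈ MS), ∑ c ∈ Rf, y a c = 0 :=
        Finset.sum_eq_zero (fun a ha => hnotMS a (Finset.mem_filter.mp ha).2)
      rw [e1, e2, add_zero]
      exact Finset.sum_congr rfl (fun a ha => hMSrow a ha)
    have hsum3 : ∑ a ∈ MS, tot y a = ∑ a ∈ MSH, tot y a := by
      apply Finset.sum_subset Finset.subset_union_left
      intro a haMSH haMS
      exact hHgnoty a haMSH haMS
    have hsum4 : ∑ a ∈ MSH, tot x a ≤ ∑ c ∈ Rf, colS x c := by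
      have e1 : ∑ a ∈ MSH, tot x a = ∑ a ∈ MSH, ∑ c ∈ Rf, x a c :=
        Finset.sum_congr rfl (fun a ha => (hMSHx a ha).symm)
      rw [e1, Finset.sum_comm]
      apply Finset.sum_le_sum
      intro c _
      unfold colS
      exact Finset.sum_le_sum_of_subset_of_nonneg (Finset.subset_univ MSH)
        (fun a _ _ => hFx.1 a c)
    have hsum5 : ∑ c ∈ Rf, colS x c ≤ ∑ c ∈ Rf, (I.quota c : ℝ) :=
      Finset.sum_le_sum (fun c _ => hFx.2.2.1 c)
    have hstar : ∑ a ∈ MSH, tot x a ≤ ∑ a ∈ MSH, tot y a := by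
      calc ∑ a ∈ MSH, tot x a ≤ ∑ c ∈ Rf, colS x c := hsum4
      _ ≤ ∑ c ∈ Rf, (I.quota c : ℝ) := hsum5
      _ = ∑ c ∈ Rf, colS y c := hsum1
      _ = ∑ a ∈ MS, tot y a := hsum2
      _ = ∑ a ∈ MSH, tot y a := hsum3
    have hsplitx : ∑ a ∈ MSH, tot x a + ∑ a ∈ MSHᶜ, tot x a = ∑ a, tot x a :=
      Finset.sum_add_sum_compl MSH _
    have hsplity : ∑ a ∈ MSH, tot y a + ∑ a ∈ MSHᶜ, tot y a = ∑ a, tot y a :=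
      Finset.sum_add_sum_compl MSH _
    have hrest : ∑ a ∈ MSHᶜ, tot x a ≤ ∑ a ∈ MSHᶜ, tot y a := by
      apply Finset.sum_le_sum
      intro a ha
      have h1 : a ∉ MSH := Finset.mem_compl.mp ha
      have h2 : a ∉ Hg := fun h => h1 (Finset.mem_union_right _ h)
      exact le_of_not_gt (fun hlt => h2 ((hmem_Hg a).mpr hlt))
    linarith
  · push_neg at hhun
    exact Finset.sum_le_sum (fun a _ => hhun a)

end Stmt13Aux

/-- if `a*` is partially allocated in a valid allocation `x`, there is
a valid allocation `y` whose allocated agents are among those of `x` and which fully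
allocates `a*`. -/
theorem stmt13 {A C : Type*} [Fintype A] [Fintype C] (I : AllocInstance A C)
    (hpre : I.TotalPreorder)
    (x : A → C → ℝ) (hval : I.Valid x) (astar : A)
    (h1 : 0 < ∑ c, x astar c) (h2 : ∑ c, x astar c < 1) :
    ∃ y : A → C → ℝ, I.Valid y ∧
      (∀ a, 0 < ∑ c, y a c → 0 < ∑ c, x a c) ∧
      ∑ c, y astar c = 1 := by
  classical
  obtain ⟨hFx, hPRx, hPEx⟩ := hval
  have h1' : 0 < Stmt13Aux.tot x astar := h1
  have h2' : Stmt13Aux.tot x astar < 1 := h2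
  obtain ⟨y, hyK, hyfull, hyV⟩ := Stmt13Aux.exists_final_y I x hFx astar h1' h2'
  have hsuppx : ∀ a c, 0 < y a c → 0 < x a c := by
    intro a c h
    rcases lt_or_eq_of_le (hFx.1 a c) with h' | h'
    · exact h'
    · exfalso
      have h0 := hyK.2.1 a c h'.symm
      linarith
  have hFy : I.Feasible y := by
    refine ⟨hyK.1, ?_, hyK.2.2.1, hyK.2.2.2.1⟩
    intro a c hne
    exact hyK.2.1 a c (hFx.2.1 a c hne)
  have hPRy : I.PR y := by
    intro c e he b' hb' hst hpos
    have hx : 0 < x e c := hsuppx e c hpos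
    have hfull := hPRx c e he b' hb' hst hx
    exact hyK.2.2.2.2 b' hfull
  have hPEy : I.PE y := by
    rintro ⟨z, hFz, hPRz, hge, b, hb⟩
    have hV1 : (∑ a, Stmt13Aux.tot y a) < ∑ a, Stmt13Aux.tot z a := by
      apply Finset.sum_lt_sum
      · intro a _
        exact hge a
      · exact ⟨b, Finset.mem_univ b, hb⟩
    have hV2 := Stmt13Aux.V_le_of_valid I hpre x ⟨hFx, hPRx, hPEx⟩ z hFz
    linarith
  refine ⟨y, ⟨hFy, hPRy, hPEy⟩, ?_, hyfull⟩
  intro a ha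
  obtain ⟨c, hc⟩ := Stmt13Aux.pos_cell_of_tot hyK.1 ha
  exact Stmt13Aux.tot_pos_cell hFx.1 (hsuppx a c hc)
end

section
/- Every valid (possibly fractional) allocation x can be represented as a convex combination of valid integral allocations: there exist valid integral allocations x^(1), …, x^(k) and nonnegative reals λ_1, …, λ_k summing to 1 with x = ∑_i λ_i x^(i). -/
open Finset

/-!
Let `T` be the categories reachable from an agent with unused demand along alternating paths
whose edges are positive shares of `x` or "safe" seats (the agent is eligible and every agent of
strictly higher priority is fully served), and `S` the agents with unused demand or a positive
share in `T`. Shifting `x` along such a path keeps PR and feasibility and serves the starting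
agent more, so by Pareto efficiency every category of `T` is full.

Every `y` supported where `x` is, serving fully the agents `x` serves fully and filling every
category of `T` is then valid: PR is inherited from `x`, and a Pareto improvement `z` would give
the agents of `S`, who can only be seated in `T`, more than `∑_{c ∈ T} q_c`. These `y` form a
face of a bipartite degree-constrained polytope. Its extreme points are integral, because a
fractional point can be moved both ways along a nonzero direction supported on its fractional
cells that keeps every tight row and column sum; such a direction exists by counting fractional
cells against the tight rows and columns they meet (each meets at least two). By Krein–Milman, `x`
is a convex combination of these integral, hence valid, allocations.
-/

section Counting

open scoped Classical

variable {ι M : Type*} [Fintype ι]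

lemma two_le_card_filter_notMem [AddCommGroup M] (G : AddSubgroup M) {f : ι → M}
    (hsum : ∑ i, f i ∈ G) (hf : ∃ i, f i ∉ G) : 2 ≤ #{i | f i ∉ G} := by
  obtain ⟨i, hi⟩ := hf
  have hmem : ∑ j ∈ {j | f j ∉ G}, f j ∈ G := by
    rw [← sum_filter_add_sum_filter_not univ (fun j => f j ∉ G)] at hsum
    have hrest : ∑ j ∈ {j | ¬ f j ∉ G}, f j ∈ G := G.sum_mem fun j hj => by simpa using hj
    simpa using G.sub_mem hsum hrest
  have hpos : 0 < #{j | f j ∉ G} := card_pos.2 ⟨i, by simpa using hi⟩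
  by_contra! hlt
  obtain ⟨j, hj⟩ := card_eq_one.1 (by omega : #{j | f j ∉ G} = 1)
  have hj' : j ∈ ({j | f j ∉ G} : Finset ι) := hj ▸ mem_singleton_self j
  rw [hj, sum_singleton] at hmem
  exact (mem_filter.1 hj').2 hmem

lemma two_mul_card_le_sum {s : Finset ι} {d : ι → ℕ} (hd : ∀ i ∈ s, 2 ≤ d i) :
    2 * #s ≤ ∑ i, d i := by
  rw [mul_comm, ← smul_eq_mul]
  exact (card_nsmul_le_sum s d 2 hd).trans (sum_le_sum_of_subset (subset_univ s))

lemma eq_zero_of_sum_le_two_mul_card {s : Finset ι} {d : ι → ℕ} (hd : ∀ i ∈ s, 2 ≤ d i)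
    (hsum : ∑ i, d i ≤ 2 * #s) {i : ι} (hi : i ∉ s) : d i = 0 := by
  have h2 : #s • 2 ≤ ∑ j ∈ s, d j := card_nsmul_le_sum s d 2 hd
  have hsplit := sum_add_sum_compl s d
  have hi' : d i ≤ ∑ j ∈ sᶜ, d j := single_le_sum (fun _ _ => Nat.zero_le _) (mem_compl.2 hi)
  simp only [smul_eq_mul] at h2
  omega

lemma sum_sum_eq_sum_sum_of_eq_zero {α β R : Type*} [Fintype β] [AddCommMonoid R]
    {z : α → β → R} {s : Finset α} {t : Finset β}
    (h : ∀ a ∈ s, ∀ c ∉ t, z a c = 0) : ∑ a ∈ s, ∑ c, z a c = ∑ c ∈ t, ∑ a ∈ s, z a c := by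
  rw [sum_comm]
  exact (sum_subset (subset_univ t) fun c _ hc => sum_eq_zero fun a ha => h a ha c hc).symm

end Counting

section BipartiteKernel

open scoped Classical

variable {A C K : Type*} [Fintype A] [Fintype C] [Field K]

lemma LinearMap.ker_ne_bot_of_finrank_range_lt {V W : Type*} [AddCommGroup V]
    [Module K V] [AddCommGroup W] [Module K W] [FiniteDimensional K V] (f : V →ₗ[K] W)
    (h : Module.finrank K (LinearMap.range f) < Module.finrank K V) : LinearMap.ker f ≠ ⊥ := by
  have := f.finrank_range_add_finrank_ker
  exact Submodule.one_le_finrank_iff.mp (by omega)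

def rowColSums (R : Finset A) (Q : Finset C) : (A → C → K) →ₗ[K] R ⊕ Q → K :=
  LinearMap.pi <| Sum.elim
    (fun a => ∑ c, (LinearMap.proj c : (C → K) →ₗ[K] K).comp (LinearMap.proj a.1))
    (fun c => ∑ a, (LinearMap.proj c.1 : (C → K) →ₗ[K] K).comp (LinearMap.proj a))

@[simp]
lemma rowColSums_inl (R : Finset A) (Q : Finset C) (σ : A → C → K) (a : R) :
    rowColSums R Q σ (.inl a) = ∑ c, σ a c := by
  simp [rowColSums]

@[simp]
lemma rowColSums_inr (R : Finset A) (Q : Finset C) (σ : A → C → K) (c : Q) :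
    rowColSums R Q σ (.inr c) = ∑ a, σ a c := by
  simp [rowColSums]

lemma sum_rowColSums_inl_eq_sum_inr {R : Finset A} {Q : Finset C} {σ : A → C → K}
    (hσ : ∀ a c, σ a c ≠ 0 → a ∈ R ∧ c ∈ Q) :
    ∑ a : R, rowColSums R Q σ (.inl a) = ∑ c : Q, rowColSums R Q σ (.inr c) := by
  simp only [rowColSums_inl, rowColSums_inr]
  rw [sum_coe_sort R (fun a => ∑ c, σ a c), sum_coe_sort Q (fun c => ∑ a, σ a c),
    sum_subset (subset_univ R), sum_subset (subset_univ Q), sum_comm]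
  · exact fun c _ hc => sum_eq_zero fun a _ => by_contra fun h => hc (hσ a c h).2
  · exact fun a _ ha => sum_eq_zero fun c _ => by_contra fun h => ha (hσ a c h).1

/-- The incidence vectors of `R` and `Q` restricted to `E` span at most `#R + #Q`
dimensions, and one fewer when every cell of `E` lies in `R × Q`, since then the row vectors
and the column vectors have the same sum. -/
lemma exists_ne_zero_rowColSums_eq_zero {E : Finset (A × C)} {R : Finset A} {Q : Finset C}
    (hcard : #R + #Q ≤ #E) (h : #R + #Q < #E ∨ E.Nonempty ∧ ∀ e ∈ E, e.1 ∈ R ∧ e.2 ∈ Q) :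
    ∃ σ : A → C → K, σ ≠ 0 ∧ (∀ a c, (a, c) ∉ E → σ a c = 0) ∧ rowColSums R Q σ = 0 := by
  let extend : (E → K) →ₗ[K] A → C → K := LinearMap.pi fun a => LinearMap.pi fun c =>
    if h : (a, c) ∈ E then LinearMap.proj ⟨(a, c), h⟩ else 0
  have extend_apply f a c : extend f a c = if h : (a, c) ∈ E then f ⟨(a, c), h⟩ else 0 := by
    simp only [extend, LinearMap.pi_apply]; split_ifs <;> rfl
  have hker : LinearMap.ker (rowColSums R Q ∘ₗ extend) ≠ ⊥ := by
    apply LinearMap.ker_ne_bot_of_finrank_range_lt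
    have hW : Module.finrank K (R ⊕ Q → K) = #R + #Q := by
      simp [Module.finrank_fintype_fun_eq_card]
    rw [Module.finrank_fintype_fun_eq_card, Fintype.card_coe]
    rcases h with hlt | ⟨⟨e, he⟩, hin⟩
    · exact (Submodule.finrank_le _).trans_lt (hW ▸ hlt)
    let φ : (R ⊕ Q → K) →ₗ[K] K :=
      ∑ a : R, LinearMap.proj (.inl a) - ∑ c : Q, LinearMap.proj (.inr c)
    have hφ : φ ≠ 0 := fun h0 => by
      simpa [φ, Pi.single_apply] using
        LinearMap.congr_fun h0 (Pi.single (.inl ⟨e.1, (hin e he).1⟩) 1)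
    have hrange : LinearMap.range (rowColSums R Q ∘ₗ extend) ≤ LinearMap.ker φ := by
      rintro _ ⟨f, rfl⟩
      have hsupp a c (h : extend f a c ≠ 0) : a ∈ R ∧ c ∈ Q :=
        hin (a, c) (by by_contra hac; simp [extend_apply, hac] at h)
      simpa [φ, sub_eq_zero] using sum_rowColSums_inl_eq_sum_inr hsupp
    calc Module.finrank K (LinearMap.range (rowColSums R Q ∘ₗ extend))
        ≤ Module.finrank K (LinearMap.ker φ) := Submodule.finrank_mono hrange
      _ < Module.finrank K (R ⊕ Q → K) :=
        Submodule.finrank_lt (by rwa [ne_eq, LinearMap.ker_eq_top])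
      _ ≤ #E := hW ▸ hcard
  obtain ⟨f, hf, hf0⟩ := Submodule.exists_mem_ne_zero_of_ne_bot hker
  refine ⟨extend f, fun h => hf0 (funext fun e => ?_), fun a c hac => ?_, hf⟩
  · simpa [extend_apply, e.2] using congrFun (congrFun h e.1.1) e.1.2
  · simp [extend_apply, hac]

theorem exists_ne_zero_of_exists_notMem (G : AddSubgroup K) {y : A → C → K}
    (hy : ∃ a c, y a c ∉ G) :
    ∃ σ : A → C → K, σ ≠ 0 ∧ (∀ a c, y a c ∈ G → σ a c = 0) ∧
      (∀ a, ∑ c, y a c ∈ G → ∑ c, σ a c = 0) ∧ (∀ c, ∑ a, y a c ∈ G → ∑ a, σ a c = 0) := by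
  set E : Finset (A × C) := {e | y e.1 e.2 ∉ G}
  set R : Finset A := {a | ∑ c, y a c ∈ G ∧ ∃ c, y a c ∉ G}
  set Q : Finset C := {c | ∑ a, y a c ∈ G ∧ ∃ a, y a c ∉ G}
  have hE_rows : #E = ∑ a, #{c | y a c ∉ G} := by
    simp only [E, card_filter, Fintype.sum_prod_type]
  have hE_cols : #E = ∑ c, #{a | y a c ∉ G} := by
    simp only [E, card_filter, Fintype.sum_prod_type_right]
  have hdegR : ∀ a ∈ R, 2 ≤ #{c | y a c ∉ G} := fun a ha =>
    two_le_card_filter_notMem G (mem_filter.1 ha).2.1 (mem_filter.1 ha).2.2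
  have hdegQ : ∀ c ∈ Q, 2 ≤ #{a | y a c ∉ G} := fun c hc =>
    two_le_card_filter_notMem G (mem_filter.1 hc).2.1 (mem_filter.1 hc).2.2
  have hR := hE_rows ▸ two_mul_card_le_sum hdegR
  have hQ := hE_cols ▸ two_mul_card_le_sum hdegQ
  have hcases : #R + #Q < #E ∨ E.Nonempty ∧ ∀ e ∈ E, e.1 ∈ R ∧ e.2 ∈ Q := by
    refine or_iff_not_imp_left.2 fun hge => ⟨?_, fun e he => ⟨?_, ?_⟩⟩
    · obtain ⟨a, c, h⟩ := hy
      exact ⟨(a, c), by simpa [E] using h⟩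
    · by_contra ha
      have := card_eq_zero.1 (eq_zero_of_sum_le_two_mul_card hdegR (by omega) ha)
      exact (filter_eq_empty_iff.1 this) (mem_univ e.2) (by simpa [E] using he)
    · by_contra hc
      have := card_eq_zero.1 (eq_zero_of_sum_le_two_mul_card hdegQ (by omega) hc)
      exact (filter_eq_empty_iff.1 this) (mem_univ e.1) (by simpa [E] using he)
  obtain ⟨σ, hσ, hsupp, hsums⟩ :=
    exists_ne_zero_rowColSums_eq_zero (K := K) (by omega) hcases
  have hzero a c (h : y a c ∈ G) : σ a c = 0 := hsupp a c (by simpa [E] using h)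
  refine ⟨σ, hσ, hzero, fun a ha => ?_, fun c hc => ?_⟩
  · by_cases haR : a ∈ R
    · simpa using congrFun hsums (.inl ⟨a, haR⟩)
    · exact sum_eq_zero fun c _ => hzero a c 
        (by_contra fun h => haR (mem_filter.2 ⟨mem_univ a, ha, c, h⟩))
  · by_cases hcQ : c ∈ Q
    · simpa using congrFun hsums (.inr ⟨c, hcQ⟩)
    · exact sum_eq_zero fun a _ => hzero a c 
        (by_contra fun h => hcQ (mem_filter.2 ⟨mem_univ c, hc, a, h⟩))

end BipartiteKernel

open Filter Topology

section Perturbation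

lemma eventually_add_mul_le {u v d : ℝ} (h : u ≤ v) (hd : 0 < d → u < v) :
    ∀ᶠ t in 𝓝[≥] (0 : ℝ), u + t * d ≤ v := by
  rcases le_or_gt d 0 with hd0 | hd0
  · filter_upwards [self_mem_nhdsWithin] with t (ht : 0 ≤ t)
    nlinarith
  · have hlim : Tendsto (fun t => u + t * d) (𝓝 0) (𝓝 (u + 0 * d)) :=
      (tendsto_id.mul_const d).const_add u
    rw [zero_mul, add_zero] at hlim
    exact nhdsWithin_le_nhds ((hlim.eventually (gt_mem_nhds (hd hd0))).mono fun _ ht => ht.le)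

lemma eventually_le_add_mul {u v d : ℝ} (h : v ≤ u) (hd : d < 0 → v < u) :
    ∀ᶠ t in 𝓝[≥] (0 : ℝ), v ≤ u + t * d := by
  filter_upwards [eventually_add_mul_le (d := -d) (neg_le_neg h)
    fun hd' => neg_lt_neg (hd (by linarith))] with t ht
  linarith

lemma exists_pos_of_eventually_nhdsGE {p : ℝ → Prop} (h : ∀ᶠ t in 𝓝[≥] (0 : ℝ), p t) :
    ∃ t > 0, p t := by
  have hpos : ∀ᶠ t in 𝓝[>] (0 : ℝ), 0 < t := self_mem_nhdsWithin
  obtain ⟨t, ht, hp⟩ :=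
    (hpos.and (h.filter_mono (nhdsWithin_mono _ Set.Ioi_subset_Ici_self))).exists
  exact ⟨t, ht, hp⟩

end Perturbation

section MatchingFace

variable {A C : Type*} [Fintype A] [Fintype C]

structure IsFracMatching (q : C → ℕ) (S : A → C → Prop) (R : Set A) (Q : Set C)
    (y : A → C → ℝ) : Prop where
  nonneg : ∀ a c, 0 ≤ y a c
  eq_zero : ∀ a c, ¬ S a c → y a c = 0
  row_le : ∀ a, ∑ c, y a c ≤ 1
  row_eq : ∀ a ∈ R, ∑ c, y a c = 1
  col_le : ∀ c, ∑ a, y a c ≤ q c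
  col_eq : ∀ c ∈ Q, ∑ a, y a c = q c

variable {q : C → ℕ} {S : A → C → Prop} {R : Set A} {Q : Set C}

lemma IsFracMatching.le_one {y : A → C → ℝ} (hy : IsFracMatching q S R Q y) (a : A) (c : C) :
    y a c ≤ 1 :=
  (single_le_sum (fun c' _ => hy.nonneg a c') (mem_univ c)).trans (hy.row_le a)

lemma convex_setOf_isFracMatching : Convex ℝ {y | IsFracMatching q S R Q y} := by
  intro y hy z hz s t hs ht hst
  have hrow a : ∑ c, (s • y + t • z) a c = s * ∑ c, y a c + t * ∑ c, z a c := by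
    simp [sum_add_distrib, mul_sum]
  have hcol c : ∑ a, (s • y + t • z) a c = s * ∑ a, y a c + t * ∑ a, z a c := by
    simp [sum_add_distrib, mul_sum]
  refine ⟨fun a c => ?_, fun a c h => ?_, fun a => ?_, fun a ha => ?_, fun c => ?_, fun c hc => ?_⟩
  · simpa using add_nonneg (mul_nonneg hs (hy.nonneg a c)) (mul_nonneg ht (hz.nonneg a c))
  · simp [hy.eq_zero a c h, hz.eq_zero a c h]
  · rw [hrow]; nlinarith [hy.row_le a, hz.row_le a]
  · rw [hrow, hy.row_eq a ha, hz.row_eq a ha]; linarith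
  · rw [hcol]; nlinarith [hy.col_le c, hz.col_le c]
  · rw [hcol, hy.col_eq c hc, hz.col_eq c hc, ← add_mul, hst, one_mul]

lemma isClosed_setOf_isFracMatching : IsClosed {y | IsFracMatching q S R Q y} := by
  have : {y | IsFracMatching q S R Q y} =
      {y : A → C → ℝ | (∀ a c, 0 ≤ y a c) ∧ (∀ a c, ¬ S a c → y a c = 0) ∧ (∀ a, ∑ c, y a c ≤ 1) ∧
        (∀ a ∈ R, ∑ c, y a c = 1) ∧ (∀ c, ∑ a, y a c ≤ q c) ∧ (∀ c ∈ Q, ∑ a, y a c = q c)} := by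
    ext y
    exact ⟨fun ⟨h1, h2, h3, h4, h5, h6⟩ => ⟨h1, h2, h3, h4, h5, h6⟩,
      fun ⟨h1, h2, h3, h4, h5, h6⟩ => ⟨h1, h2, h3, h4, h5, h6⟩⟩
  rw [this]
  simp only [Set.ofPred_and, Set.ofPred_forall]
  refine .inter ?_ (.inter ?_ (.inter ?_ (.inter ?_ (.inter ?_ ?_)))) <;>
    repeat refine isClosed_iInter fun _ => ?_
  all_goals first
    | exact isClosed_le continuous_const (by fun_prop)
    | exact isClosed_le (by fun_prop) continuous_const
    | exact isClosed_eq (by fun_prop) continuous_const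

lemma isCompact_setOf_isFracMatching : IsCompact {y | IsFracMatching q S R Q y} :=
  isCompact_Icc.of_isClosed_subset isClosed_setOf_isFracMatching
    fun _ hy => ⟨fun a c => hy.nonneg a c, fun a c => hy.le_one a c⟩

lemma eq_zero_or_eq_one_of_mem_range_intCast {v : ℝ} (h0 : 0 ≤ v) (h1 : v ≤ 1)
    (hv : v ∈ (Int.castAddHom ℝ).range) : v = 0 ∨ v = 1 := by
  obtain ⟨n, rfl⟩ := hv
  simp only [Int.coe_castAddHom] at h0 h1 ⊢
  have h0' : 0 ≤ n := by exact_mod_cast h0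
  have h1' : n ≤ 1 := by exact_mod_cast h1
  have : n = 0 ∨ n = 1 := by omega
  rcases this with rfl | rfl <;> simp

lemma IsFracMatching.eventually_add_smul {y σ : A → C → ℝ} (hy : IsFracMatching q S R Q y)
    (hzero : ∀ a c, y a c ∈ (Int.castAddHom ℝ).range → σ a c = 0)
    (hrow : ∀ a, ∑ c, y a c ∈ (Int.castAddHom ℝ).range → ∑ c, σ a c = 0)
    (hcol : ∀ c, ∑ a, y a c ∈ (Int.castAddHom ℝ).range → ∑ a, σ a c = 0) :
    ∀ᶠ t in 𝓝[≥] (0 : ℝ), IsFracMatching q S R Q (y + t • σ) := by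
  have hnat (n : ℕ) : (n : ℝ) ∈ (Int.castAddHom ℝ).range := ⟨n, by simp⟩
  have hone : (1 : ℝ) ∈ (Int.castAddHom ℝ).range := ⟨1, by simp⟩
  have hnonneg : ∀ᶠ t in 𝓝[≥] (0 : ℝ), ∀ a c, 0 ≤ y a c + t * σ a c :=
    eventually_all.2 fun a => eventually_all.2 fun c =>
      eventually_le_add_mul (hy.nonneg a c) fun hσ => (hy.nonneg a c).lt_of_ne fun h =>
        hσ.ne (hzero a c (h ▸ zero_mem _))
  have hrow_le : ∀ᶠ t in 𝓝[≥] (0 : ℝ), ∀ a, ∑ c, y a c + t * ∑ c, σ a c ≤ 1 :=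
    eventually_all.2 fun a => eventually_add_mul_le (hy.row_le a) fun hσ =>
      (hy.row_le a).lt_of_ne fun h => hσ.ne' (hrow a (h ▸ hone))
  have hcol_le : ∀ᶠ t in 𝓝[≥] (0 : ℝ), ∀ c, ∑ a, y a c + t * ∑ a, σ a c ≤ q c :=
    eventually_all.2 fun c => eventually_add_mul_le (hy.col_le c) fun hσ =>
      (hy.col_le c).lt_of_ne fun h => hσ.ne' (hcol c (h ▸ hnat (q c)))
  filter_upwards [hnonneg, hrow_le, hcol_le] with t hnonneg hrow_le hcol_le
  have hrow_eq a : ∑ c, (y + t • σ) a c = ∑ c, y a c + t * ∑ c, σ a c := by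
    simp [sum_add_distrib, mul_sum]
  have hcol_eq c : ∑ a, (y + t • σ) a c = ∑ a, y a c + t * ∑ a, σ a c := by
    simp [sum_add_distrib, mul_sum]
  refine ⟨fun a c => by simpa using hnonneg a c, fun a c h => ?_, fun a => hrow_eq a ▸ hrow_le a,
    fun a ha => ?_, fun c => hcol_eq c ▸ hcol_le c, fun c hc => ?_⟩
  · have h0 := hy.eq_zero a c h
    simp [h0, hzero a c (h0 ▸ zero_mem _)]
  · have h1 := hy.row_eq a ha
    rw [hrow_eq, h1, hrow a (h1 ▸ hone), mul_zero, add_zero]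
  · have hq := hy.col_eq c hc
    rw [hcol_eq, hq, hcol c (hq ▸ hnat (q c)), mul_zero, add_zero]

lemma IsFracMatching.integral_of_mem_extremePoints {y : A → C → ℝ}
    (hy : y ∈ {y | IsFracMatching q S R Q y}.extremePoints ℝ) (a : A) (c : C) :
    y a c = 0 ∨ y a c = 1 := by
  by_contra! hfrac
  have hP : IsFracMatching q S R Q y := hy.1
  obtain ⟨σ, hσ, hzero, hrow, hcol⟩ := exists_ne_zero_of_exists_notMem (Int.castAddHom ℝ).range
    ⟨a, c, fun h => (eq_zero_or_eq_one_of_mem_range_intCast (hP.nonneg a c) (hP.le_one a c) h).elim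
      hfrac.1 hfrac.2⟩
  have hplus := hP.eventually_add_smul hzero hrow hcol
  have hminus := hP.eventually_add_smul (σ := -σ) (by simpa using hzero)
    (by simpa [sum_neg_distrib] using hrow) (by simpa [sum_neg_distrib] using hcol)
  obtain ⟨t, ht, hp, hm⟩ := exists_pos_of_eventually_nhdsGE (hplus.and hminus)
  rw [smul_neg, ← sub_eq_add_neg] at hm
  have := hy.2 hp hm (mem_openSegment_add_sub y (t • σ))
  rw [add_eq_left, smul_eq_zero] at this
  exact this.elim ht.ne' hσ

theorem IsFracMatching.mem_convexHull_integral {y : A → C → ℝ}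
    (hy : IsFracMatching q S R Q y) :
    y ∈ convexHull ℝ {z | IsFracMatching q S R Q z ∧ ∀ a c, z a c = 0 ∨ z a c = 1} := by
  have hfinite : {z | IsFracMatching q S R Q z ∧ ∀ a c, z a c = 0 ∨ z a c = 1}.Finite :=
    (Set.Finite.pi fun _ => Set.Finite.pi fun _ => Set.toFinite ({0, 1} : Set ℝ)).subset
      fun z hz => by simpa [Set.mem_pi] using hz.2
  have hext : {z | IsFracMatching q S R Q z}.extremePoints ℝ ⊆
      {z | IsFracMatching q S R Q z ∧ ∀ a c, z a c = 0 ∨ z a c = 1} :=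
    fun z hz => ⟨hz.1, IsFracMatching.integral_of_mem_extremePoints hz⟩
  have hKM := closure_convexHull_extremePoints isCompact_setOf_isFracMatching
    convex_setOf_isFracMatching (s := {z | IsFracMatching q S R Q z})
  exact closure_minimal (convexHull_mono hext) (hfinite.isCompact_convexHull ℝ).isClosed
    (hKM.symm ▸ hy)

end MatchingFace

namespace AllocInstance

open scoped Classical

section Reachability

variable {A C : Type*} {I : AllocInstance A C} {x : A → C → ℝ}

noncomputable def cellIndicator (b : A) (c : C) : A → C → ℝ :=
  fun a c' => if a = b ∧ c' = c then 1 else 0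

lemma sum_cellIndicator_row [Fintype C] (b a : A) (c : C) :
    ∑ c', cellIndicator b c a c' = if a = b then 1 else 0 := by
  by_cases h : a = b <;> simp [cellIndicator, h]

lemma sum_cellIndicator_col [Fintype A] (b : A) (c c' : C) :
    ∑ a, cellIndicator b c a c' = if c' = c then 1 else 0 := by
  by_cases h : c' = c <;> simp [cellIndicator, h]

variable [Fintype C]

def IsSafe (I : AllocInstance A C) (x : A → C → ℝ) (b : A) (c : C) : Prop :=
  b ∈ I.elig c ∧ ∀ a ∈ I.elig c, I.Strict c a b → ∑ c', x a c' = 1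

inductive IsReachable (I : AllocInstance A C) (x : A → C → ℝ) : C → Prop
  | start {b c} : ∑ c', x b c' < 1 → 0 < x b c ∨ I.IsSafe x b c → I.IsReachable x c
  | step {b c₀ c} : I.IsReachable x c₀ → 0 < x b c₀ → 0 < x b c ∨ I.IsSafe x b c →
      I.IsReachable x c

def IsReachableAgent (I : AllocInstance A C) (x : A → C → ℝ) (b : A) : Prop :=
  ∑ c, x b c < 1 ∨ ∃ c, I.IsReachable x c ∧ 0 < x b c

lemma IsReachableAgent.isReachable {b : A} {c : C} (hb : I.IsReachableAgent x b)
    (hbc : 0 < x b c ∨ I.IsSafe x b c) : I.IsReachable x c :=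
  hb.elim (fun h => .start h hbc) fun ⟨_, hc₀, hpos⟩ => .step hc₀ hpos hbc

-- `σ` is the flow of an alternating path from the hungry agent `a₀` to `c`.
structure IsAugmenting [Fintype A] (I : AllocInstance A C) (x : A → C → ℝ) (a₀ : A) (c : C)
    (σ : A → C → ℝ) : Prop where
  hungry : ∑ c', x a₀ c' < 1
  pos_of_neg : ∀ a c', σ a c' < 0 → 0 < x a c'
  pos_or_safe_of_pos : ∀ a c', 0 < σ a c' → 0 < x a c' ∨ I.IsSafe x a c'
  row_sum : ∀ a, ∑ c', σ a c' = if a = a₀ then 1 else 0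
  col_sum : ∀ c', ∑ a, σ a c' = if c' = c then 1 else 0

lemma IsReachable.exists_isAugmenting [Fintype A] {c : C} (h : I.IsReachable x c) :
    ∃ a₀ σ, I.IsAugmenting x a₀ c σ := by
  induction h with
  | @start b c hb hbc =>
    refine ⟨b, cellIndicator b c, hb, fun a c' h => ?_, fun a c' h => ?_,
      fun a => sum_cellIndicator_row b a c, sum_cellIndicator_col b c⟩
    · simp only [cellIndicator] at h; split_ifs at h <;> linarith
    · simp only [cellIndicator] at h; split_ifs at h with hac
      · exact hac.1 ▸ hac.2 ▸ hbc
      · linarith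
  | @step b c₀ c _ hpos hbc ih =>
    obtain ⟨a₀, σ, hσ⟩ := ih
    refine ⟨a₀, σ + cellIndicator b c - cellIndicator b c₀, hσ.hungry, fun a c' h => ?_,
      fun a c' h => ?_, fun a => ?_, fun c' => ?_⟩
    · by_cases hac : a = b ∧ c' = c₀
      · exact hac.1 ▸ hac.2 ▸ hpos
      · refine hσ.pos_of_neg a c' ?_
        simp only [Pi.sub_apply, Pi.add_apply, cellIndicator, if_neg hac] at h
        split_ifs at h <;> linarith
    · by_cases hac : a = b ∧ c' = c
      · exact hac.1 ▸ hac.2 ▸ hbc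
      · refine hσ.pos_or_safe_of_pos a c' ?_
        simp only [Pi.sub_apply, Pi.add_apply, cellIndicator, if_neg hac] at h
        split_ifs at h <;> linarith
    · simp only [Pi.sub_apply, Pi.add_apply, sum_add_distrib, sum_sub_distrib, hσ.row_sum,
        sum_cellIndicator_row, add_sub_cancel_right]
    · simp only [Pi.sub_apply, Pi.add_apply, sum_add_distrib, sum_sub_distrib, hσ.col_sum,
        sum_cellIndicator_col, add_sub_cancel_left]

end Reachability

section Augmenting

variable {A C : Type*} [Fintype A] [Fintype C] {I : AllocInstance A C} {x σ : A → C → ℝ}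
  {a₀ : A} {c : C}

lemma IsAugmenting.sum_row_add_smul (hσ : I.IsAugmenting x a₀ c σ) (t : ℝ) (a : A) :
    ∑ c', (x + t • σ) a c' = ∑ c', x a c' + t * if a = a₀ then 1 else 0 := by
  simp [sum_add_distrib, ← mul_sum, hσ.row_sum]

lemma IsAugmenting.sum_col_add_smul (hσ : I.IsAugmenting x a₀ c σ) (t : ℝ) (c' : C) :
    ∑ a, (x + t • σ) a c' = ∑ a, x a c' + t * if c' = c then 1 else 0 := by
  simp [sum_add_distrib, ← mul_sum, hσ.col_sum]

lemma IsAugmenting.eq_zero_of_notMem_elig (hσ : I.IsAugmenting x a₀ c σ) (hx : I.Feasible x)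
    {a : A} {c' : C} (ha : a ∉ I.elig c') : σ a c' = 0 := by
  have hx0 := hx.2.1 a c' ha
  rcases lt_trichotomy (σ a c') 0 with h | h | h
  · linarith [hσ.pos_of_neg a c' h]
  · exact h
  · rcases hσ.pos_or_safe_of_pos a c' h with h' | h'
    · linarith
    · exact absurd h'.1 ha

lemma IsAugmenting.eventually_feasible (hσ : I.IsAugmenting x a₀ c σ) (hx : I.Feasible x)
    (hc : ∑ a, x a c < I.quota c) : ∀ᶠ t in 𝓝[≥] (0 : ℝ), I.Feasible (x + t • σ) := by
  have hnonneg : ∀ᶠ t in 𝓝[≥] (0 : ℝ), ∀ a c', 0 ≤ x a c' + t * σ a c' :=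
    eventually_all.2 fun a => eventually_all.2 fun c' =>
      eventually_le_add_mul (hx.1 a c') (hσ.pos_of_neg a c')
  have hquota : ∀ᶠ t in 𝓝[≥] (0 : ℝ),
      ∀ c', ∑ a, x a c' + t * (if c' = c then 1 else 0) ≤ I.quota c' :=
    eventually_all.2 fun c' => eventually_add_mul_le (hx.2.2.1 c') fun h => by
      split_ifs at h with hc'
      · exact hc' ▸ hc
      · exact absurd h (lt_irrefl 0)
  have hdemand : ∀ᶠ t in 𝓝[≥] (0 : ℝ), ∀ a, ∑ c', x a c' + t * (if a = a₀ then 1 else 0) ≤ 1 :=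
    eventually_all.2 fun a => eventually_add_mul_le (hx.2.2.2 a) fun h => by
      split_ifs at h with ha
      · exact ha ▸ hσ.hungry
      · exact absurd h (lt_irrefl 0)
  filter_upwards [hnonneg, hquota, hdemand] with t hnonneg hquota hdemand
  refine ⟨fun a c' => by simpa using hnonneg a c', fun a c' ha => ?_,
    fun c' => hσ.sum_col_add_smul t c' ▸ hquota c', fun a => hσ.sum_row_add_smul t a ▸ hdemand a⟩
  simp [hx.2.1 a c' ha, hσ.eq_zero_of_notMem_elig hx ha]

lemma IsAugmenting.pr_add_smul (hσ : I.IsAugmenting x a₀ c σ) (hpr : I.PR x) {t : ℝ}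
    (ht : 0 ≤ t) : I.PR (x + t • σ) := by
  intro c' a ha a' ha' hstrict hpos
  have hfull : ∑ c'', x a' c'' = 1 := by
    have : 0 < x a c' ∨ 0 < σ a c' := by
      by_contra! h
      simp only [Pi.add_apply, Pi.smul_apply, smul_eq_mul] at hpos
      nlinarith [h.1, h.2]
    rcases this with h | h
    · exact hpr c' a ha a' ha' hstrict h
    · rcases hσ.pos_or_safe_of_pos a c' h with h | h
      · exact hpr c' a ha a' ha' hstrict h
      · exact h.2 a' ha' hstrict
  have hne : a' ≠ a₀ := fun h => (h ▸ hσ.hungry).ne hfull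
  rw [hσ.sum_row_add_smul, hfull, if_neg hne, mul_zero, add_zero]

theorem IsReachable.sum_eq_quota (hx : I.Valid x) (hc : I.IsReachable x c) :
    ∑ a, x a c = I.quota c := by
  obtain ⟨a₀, σ, hσ⟩ := hc.exists_isAugmenting
  by_contra hne
  obtain ⟨t, ht, hfeas⟩ :=
    exists_pos_of_eventually_nhdsGE (hσ.eventually_feasible hx.1 ((hx.1.2.2.1 c).lt_of_ne hne))
  refine hx.2.2 ⟨x + t • σ, hfeas, hσ.pr_add_smul hx.2.1 ht.le, fun a => ?_, a₀, ?_⟩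
  · rw [hσ.sum_row_add_smul]
    split_ifs <;> linarith
  · rw [hσ.sum_row_add_smul, if_pos rfl]
    linarith

end Augmenting

section Face

variable {A C : Type*} [Fintype A] [Fintype C] {I : AllocInstance A C} {x : A → C → ℝ}

lemma IsReachableAgent.isReachable_of_mem_elig (hpre : I.TotalPreorder) (hx : I.Feasible x)
    {b : A} {c : C} (hb : I.IsReachableAgent x b) (hbc : b ∈ I.elig c) : I.IsReachable x c := by
  by_cases hsafe : I.IsSafe x b c
  · exact hb.isReachable (.inr hsafe)
  obtain ⟨a, ha, -, hfull⟩ : ∃ a ∈ I.elig c, I.Strict c a b ∧ ∑ c', x a c' ≠ 1 := by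
    simpa [IsSafe, hbc] using hsafe
  -- a hungry eligible agent of highest priority is safe
  let above : A → A → Prop := fun p p' => p ∈ I.elig c ∧ p' ∈ I.elig c ∧ I.Strict c p p'
  have : IsTrans A above := ⟨fun p p' p'' ⟨hp, hp', h₁⟩ ⟨_, hp'', h₂⟩ =>
    ⟨hp, hp'', hpre.2.1 c p hp p' hp' p'' hp'' h₁.1 h₂.1,
      fun h => h₂.2 (hpre.2.1 c p'' hp'' p hp p' hp' h h₁.1)⟩⟩
  have : Std.Irrefl above := ⟨fun _ h => h.2.2.2 h.2.2.1⟩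
  obtain ⟨m, ⟨hm, hm_hungry⟩, hmin⟩ := (Finite.wellFounded_of_trans_of_irrefl above).has_min
    {p | p ∈ I.elig c ∧ ∑ c', x p c' < 1} ⟨a, ha, (hx.2.2.2 a).lt_of_ne hfull⟩
  exact .start hm_hungry (.inr ⟨hm, fun p hp hpm =>
    by_contra fun h => hmin p ⟨hp, (hx.2.2.2 p).lt_of_ne h⟩ ⟨hp, hm, hpm⟩⟩)

def face (I : AllocInstance A C) (x : A → C → ℝ) : Set (A → C → ℝ) :=
  {y | IsFracMatching I.quota (fun a c => 0 < x a c) {a | ∑ c, x a c = 1}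
    {c | I.IsReachable x c} y}

lemma self_mem_face (hx : I.Valid x) : x ∈ I.face x :=
  ⟨hx.1.1, fun a c h => le_antisymm (not_lt.1 h) (hx.1.1 a c), hx.1.2.2.2, fun _ h => h,
    hx.1.2.2.1, fun _ hc => hc.sum_eq_quota hx⟩

lemma sum_sum_le_of_mem_face (hpre : I.TotalPreorder) (hx : I.Valid x) {y z : A → C → ℝ}
    (hy : y ∈ I.face x) (hz : I.Feasible z) (hzx : ∀ a, ∑ c, x a c = 1 → ∑ c, z a c = 1) :
    ∑ a, ∑ c, z a c ≤ ∑ a, ∑ c, y a c := by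
  have hy : IsFracMatching _ _ _ _ y := hy
  set s : Finset A := {b | I.IsReachableAgent x b}
  set t : Finset C := {c | I.IsReachable x c}
  have hs {a} : a ∈ s ↔ I.IsReachableAgent x a := by simp [s]
  have ht {c} : c ∈ t ↔ I.IsReachable x c := by simp [t]
  have hz_off : ∀ a ∈ s, ∀ c ∉ t, z a c = 0 := fun a ha c hc => by_contra fun h =>
    hc (ht.2 ((hs.1 ha).isReachable_of_mem_elig hpre hx.1 (by_contra fun he => h (hz.2.1 a c he))))
  have hy_off : ∀ a ∈ s, ∀ c ∉ t, y a c = 0 := fun a ha c hc =>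
    hy.eq_zero a c fun hpos => hc (ht.2 ((hs.1 ha).isReachable (.inl hpos)))
  have hy_off' : ∀ a ∉ s, ∀ c ∈ t, y a c = 0 := fun a ha c hc =>
    hy.eq_zero a c fun hpos => ha (hs.2 (.inr ⟨c, ht.1 hc, hpos⟩))
  have hz_s : ∑ a ∈ s, ∑ c, z a c ≤ ∑ a ∈ s, ∑ c, y a c := by
    rw [sum_sum_eq_sum_sum_of_eq_zero hz_off, sum_sum_eq_sum_sum_of_eq_zero hy_off]
    refine sum_le_sum fun c hc => ?_
    calc ∑ a ∈ s, z a c ≤ ∑ a, z a c :=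
          sum_le_sum_of_subset_of_nonneg (subset_univ s) fun a _ _ => hz.1 a c
      _ ≤ I.quota c := hz.2.2.1 c
      _ = ∑ a, y a c := (hy.col_eq c (ht.1 hc)).symm
      _ = ∑ a ∈ s, y a c := (sum_subset (subset_univ s) fun a _ ha => hy_off' a ha c hc).symm
  have hz_sc : ∑ a ∈ sᶜ, ∑ c, z a c = ∑ a ∈ sᶜ, ∑ c, y a c := sum_congr rfl fun a ha => by
    have hfull : ∑ c, x a c = 1 :=
      (hx.1.2.2.2 a).eq_of_not_lt fun h => mem_compl.1 ha (hs.2 (.inl h))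
    rw [hzx a hfull, hy.row_eq a hfull]
  rw [← sum_add_sum_compl s, ← sum_add_sum_compl s (fun a => ∑ c, y a c)]
  linarith

theorem valid_of_mem_face (hpre : I.TotalPreorder) (hx : I.Valid x) {y : A → C → ℝ}
    (hy : y ∈ I.face x) : I.Valid y := by
  have hy' : IsFracMatching _ _ _ _ y := hy
  refine ⟨⟨hy'.nonneg, fun a c ha => hy'.eq_zero a c fun h => h.ne' (hx.1.2.1 a c ha),
    hy'.col_le, hy'.row_le⟩, fun c a ha a' ha' hstrict h => ?_, ?_⟩
  · have hxpos : 0 < x a c := by_contra fun h' => h.ne' (hy'.eq_zero a c h')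
    exact hy'.row_eq a' (hx.2.1 c a ha a' ha' hstrict hxpos)
  · rintro ⟨z, hz, -, hle, a, hlt⟩
    have hzx a (h : ∑ c, x a c = 1) : ∑ c, z a c = 1 :=
      le_antisymm (hz.2.2.2 a) (hy'.row_eq a h ▸ hle a)
    have := sum_lt_sum (fun a _ => hle a) ⟨a, mem_univ a, hlt⟩
    linarith [sum_sum_le_of_mem_face hpre hx hy hz hzx]

end Face

end AllocInstance

/-- every valid (possibly fractional) allocation is a convex
combination of valid integral allocations. -/
theorem stmt14 {A C : Type*} [Fintype A] [Fintype C] (I : AllocInstance A C)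
    (hpre : I.TotalPreorder)
    (x : A → C → ℝ) (hval : I.Valid x) :
    ∃ (k : ℕ) (xs : Fin k → A → C → ℝ) (lam : Fin k → ℝ),
      (∀ i, I.Valid (xs i) ∧ I.Integral (xs i)) ∧
      (∀ i, 0 ≤ lam i) ∧ (∑ i, lam i = 1) ∧
      (∀ a c, x a c = ∑ i, lam i * xs i a c) := by
  obtain ⟨ι, _, w, z, hw₀, hw₁, hz, hxz⟩ := mem_convexHull_iff_exists_fintype.1
    (IsFracMatching.mem_convexHull_integral (I.self_mem_face hval))
  let e := Fintype.equivFin ι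
  refine ⟨Fintype.card ι, z ∘ e.symm, w ∘ e.symm,
    fun i => ⟨I.valid_of_mem_face hpre hval (hz _).1, (hz _).2⟩, fun i => hw₀ _, ?_, fun a c => ?_⟩
  · rw [← hw₁]
    exact e.symm.sum_comp w
  · rw [← hxz]
    simpa using (e.symm.sum_comp fun i => w i * z i a c).symm
end

section
/- Let x be a valid allocation such that every agent's total allocation is an integer, i.e., ∑_c x_{a,c} ∈ {0,1} for every a ∈ A. Then x can be represented as a convex combination of valid integral allocations, each of which gives every agent the same total allocation as x. -/
open Finset

/-!
Split each category `c` into `q c` unit-capacity slots, each receiving `x a c / q c` from every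
agent `a`. This turns `x` into a doubly substochastic agents × slots matrix, which its standard
dilation embeds into a doubly stochastic one; Birkhoff's theorem then writes it as a convex
combination of partial permutation matrices, and merging the slots back gives integral
allocations within the quotas. As the weights are positive and every row sum of `x` is `0` or
`1`, each term has the row sums of `x` and support inside that of `x`; feasibility, PR and PE
depend on nothing else, so each term is valid.
-/

lemma Fintype.sum_eq_zero_or_one_of_le_one {ι : Type*} [Fintype ι] {f : ι → ℝ}
    (hf : ∀ i, f i = 0 ∨ f i = 1) (hle : ∑ i, f i ≤ 1) : ∑ i, f i = 0 ∨ ∑ i, f i = 1 := by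
  by_cases hzero : ∀ i, f i = 0
  · exact Or.inl (Fintype.sum_eq_zero f hzero)
  · push Not at hzero
    obtain ⟨i, hi⟩ := hzero
    have hfi : f i ≤ ∑ j, f j :=
      Finset.single_le_sum (fun j _ => by rcases hf j with h | h <;> simp [h]) (Finset.mem_univ i)
    exact Or.inr (le_antisymm hle ((hf i).resolve_left hi ▸ hfi))

lemma eq_of_sum_mul_eq_zero_or_one {ι : Type*} [Fintype ι] {w f : ι → ℝ} {t : ℝ}
    (hw : ∀ i, 0 < w i) (hw1 : ∑ i, w i = 1) (hf0 : ∀ i, 0 ≤ f i) (hf1 : ∀ i, f i ≤ 1)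
    (ht : t = 0 ∨ t = 1) (h : ∑ i, w i * f i = t) (i : ι) : f i = t := by
  rcases ht with rfl | rfl
  · exact (mul_eq_zero.1 ((Finset.sum_eq_zero_iff_of_nonneg fun i _ =>
      mul_nonneg (hw i).le (hf0 i)).1 h i (Finset.mem_univ i))).resolve_left (hw i).ne'
  · have hgap : ∑ i, w i * (1 - f i) = 0 := by
      simp only [mul_sub, mul_one, Finset.sum_sub_distrib, hw1, h, sub_self]
    have := (mul_eq_zero.1 ((Finset.sum_eq_zero_iff_of_nonneg fun i _ =>
      mul_nonneg (hw i).le (sub_nonneg.2 (hf1 i))).1 hgap i (Finset.mem_univ i))).resolve_left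
        (hw i).ne'
    linarith

lemma exists_fin_pos_combination_of_mem_convexHull {E : Type*} [AddCommGroup E] [Module ℝ E]
    {s : Set E} {x : E} (hx : x ∈ convexHull ℝ s) :
    ∃ (k : ℕ) (z : Fin k → E) (w : Fin k → ℝ), (∀ i, z i ∈ s) ∧ (∀ i, 0 < w i) ∧
      ∑ i, w i = 1 ∧ ∑ i, w i • z i = x := by
  obtain ⟨ι, _, z, w, hzs, -, hw, hw1, hwz⟩ := eq_pos_convex_span_of_mem_convexHull hx
  let e := Fintype.equivFin ι
  refine ⟨Fintype.card ι, z ∘ e.symm, w ∘ e.symm, fun i => hzs ⟨_, rfl⟩, fun i => hw _, ?_, ?_⟩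
  · rw [← hw1]; exact e.symm.sum_comp w
  · rw [← hwz]; exact e.symm.sum_comp fun i => w i • z i

namespace Matrix

variable {m n : Type*} [Fintype m] [Fintype n]

def manyToOneMatchings (q : n → ℕ) : Set (Matrix m n ℝ) :=
  {P | (∀ i j, P i j = 0 ∨ P i j = 1) ∧ (∀ i, ∑ j, P i j ≤ 1) ∧ ∀ j, ∑ i, P i j ≤ q j}

lemma nonneg_of_mem_manyToOneMatchings {q : n → ℕ} {P : Matrix m n ℝ}
    (hP : P ∈ manyToOneMatchings q) (i : m) (j : n) : 0 ≤ P i j := by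
  rcases hP.1 i j with h | h <;> simp [h]

lemma le_one_of_mem_manyToOneMatchings {q : n → ℕ} {P : Matrix m n ℝ}
    (hP : P ∈ manyToOneMatchings q) (i : m) (j : n) : P i j ≤ 1 := by
  rcases hP.1 i j with h | h <;> simp [h]

lemma sum_slots_mem_manyToOneMatchings {q : n → ℕ} {P : Matrix m (Σ j, Fin (q j)) ℝ}
    (hP : P ∈ manyToOneMatchings 1) :
    (of fun i j => ∑ k, P i ⟨j, k⟩ : Matrix m n ℝ) ∈ manyToOneMatchings q := by
  have hrow : ∀ i, ∑ j, ∑ k, P i ⟨j, k⟩ ≤ 1 := fun i => Fintype.sum_sigma (P i) ▸ hP.2.1 i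
  refine ⟨fun i j => ?_, hrow, fun j => ?_⟩
  · refine Fintype.sum_eq_zero_or_one_of_le_one (fun k => hP.1 i ⟨j, k⟩) ?_
    calc ∑ k, P i ⟨j, k⟩ ≤ ∑ j', ∑ k, P i ⟨j', k⟩ :=
          Finset.single_le_sum (f := fun j' => ∑ k, P i ⟨j', k⟩)
            (fun j' _ => Finset.sum_nonneg fun k _ => nonneg_of_mem_manyToOneMatchings hP _ _)
            (Finset.mem_univ j)
      _ ≤ 1 := hrow i
  · calc ∑ i, ∑ k, P i ⟨j, k⟩ = ∑ k : Fin (q j), ∑ i, P i ⟨j, k⟩ := Finset.sum_comm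
      _ ≤ ∑ _k : Fin (q j), (1 : ℝ) := Finset.sum_le_sum fun k _ => by simpa using hP.2.2 ⟨j, k⟩
      _ = q j := by simp

variable [DecidableEq m] [DecidableEq n]

def stochasticDilation (M : Matrix m n ℝ) : Matrix (m ⊕ n) (m ⊕ n) ℝ :=
  fromBlocks (diagonal fun i => 1 - ∑ j, M i j) M Mᵀ (diagonal fun j => 1 - ∑ i, M i j)

lemma stochasticDilation_mem_doublyStochastic {M : Matrix m n ℝ} (h0 : ∀ i j, 0 ≤ M i j)
    (hrow : ∀ i, ∑ j, M i j ≤ 1) (hcol : ∀ j, ∑ i, M i j ≤ 1) :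
    stochasticDilation M ∈ doublyStochastic ℝ (m ⊕ n) := by
  refine mem_doublyStochastic_iff_sum.2 ⟨?_, ?_, ?_⟩
  · rintro (i | j) (i' | j') <;>
      simp [stochasticDilation, diagonal_apply, h0] <;> split_ifs <;> simp [hrow, hcol]
  · rintro (i | j) <;> simp [stochasticDilation, Fintype.sum_sum_type, diagonal_apply]
  · rintro (i | j) <;> simp [stochasticDilation, Fintype.sum_sum_type, diagonal_apply]

lemma toBlocks₁₂_permMatrix_mem_manyToOneMatchings (σ : Equiv.Perm (m ⊕ n)) :
    (σ.permMatrix ℝ).toBlocks₁₂ ∈ manyToOneMatchings (1 : n → ℕ) := by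
  have hP := permMatrix_mem_doublyStochastic (R := ℝ) (σ := σ)
  refine ⟨fun i j => ?_, fun i => ?_, fun j => ?_⟩
  · simp only [toBlocks₁₂, of_apply, PEquiv.toMatrix_apply, Equiv.toPEquiv_apply,
      Option.mem_def, Option.some.injEq]
    split_ifs <;> simp
  · calc ∑ j, (σ.permMatrix ℝ).toBlocks₁₂ i j
        ≤ ∑ i', σ.permMatrix ℝ (.inl i) (.inl i') + ∑ j, σ.permMatrix ℝ (.inl i) (.inr j) :=
          le_add_of_nonneg_left (Finset.sum_nonneg fun _ _ => nonneg_of_mem_doublyStochastic hP)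
      _ = 1 := by rw [← Fintype.sum_sum_type, sum_row_of_mem_doublyStochastic hP]
  · calc ∑ i, (σ.permMatrix ℝ).toBlocks₁₂ i j
        ≤ ∑ i, σ.permMatrix ℝ (.inl i) (.inr j) + ∑ j', σ.permMatrix ℝ (.inr j') (.inr j) :=
          le_add_of_nonneg_right (Finset.sum_nonneg fun _ _ => nonneg_of_mem_doublyStochastic hP)
      _ = (1 : n → ℕ) j := by
          rw [← Fintype.sum_sum_type (fun t => σ.permMatrix ℝ t (.inr j)),
            sum_col_of_mem_doublyStochastic hP]
          simp

theorem mem_convexHull_manyToOneMatchings_one {M : Matrix m n ℝ} (h0 : ∀ i j, 0 ≤ M i j)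
    (hrow : ∀ i, ∑ j, M i j ≤ 1) (hcol : ∀ j, ∑ i, M i j ≤ 1) :
    M ∈ convexHull ℝ (manyToOneMatchings (1 : n → ℕ)) := by
  have hlin : IsLinearMap ℝ (toBlocks₁₂ : Matrix (m ⊕ n) (m ⊕ n) ℝ → Matrix m n ℝ) :=
    ⟨fun _ _ => rfl, fun _ _ => rfl⟩
  have hD := stochasticDilation_mem_doublyStochastic h0 hrow hcol
  rw [← SetLike.mem_coe, doublyStochastic_eq_convexHull_permMatrix] at hD
  have hM : M ∈ convexHull ℝ
      (toBlocks₁₂ '' {P | ∃ σ : Equiv.Perm (m ⊕ n), σ.permMatrix ℝ = P}) := by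
    rw [← hlin.image_convexHull]
    exact ⟨_, hD, toBlocks_fromBlocks₁₂ _ _ _ _⟩
  refine convexHull_mono ?_ hM
  rintro _ ⟨_, ⟨σ, rfl⟩, rfl⟩
  exact toBlocks₁₂_permMatrix_mem_manyToOneMatchings σ

theorem mem_convexHull_manyToOneMatchings {q : n → ℕ} {M : Matrix m n ℝ}
    (h0 : ∀ i j, 0 ≤ M i j) (hrow : ∀ i, ∑ j, M i j ≤ 1) (hcol : ∀ j, ∑ i, M i j ≤ q j) :
    M ∈ convexHull ℝ (manyToOneMatchings q) := by
  let sumSlots (P : Matrix m (Σ j, Fin (q j)) ℝ) : Matrix m n ℝ := of fun i j => ∑ k, P i ⟨j, k⟩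
  let S : Matrix m (Σ j, Fin (q j)) ℝ := of fun i s => M i s.1 / q s.1
  have hsplit : ∀ i j, ∑ _k : Fin (q j), M i j / q j = M i j := by
    intro i j
    rcases eq_or_ne (q j) 0 with hq | hq
    · have hle : M i j ≤ q j :=
        (Finset.single_le_sum (fun i' _ => h0 i' j) (Finset.mem_univ i)).trans (hcol j)
      have : M i j = 0 := le_antisymm (by simpa [hq] using hle) (h0 i j)
      simp [this]
    · simp only [Finset.sum_const, Finset.card_univ, Fintype.card_fin, nsmul_eq_mul]
      field_simp
  have hS : S ∈ convexHull ℝ (manyToOneMatchings 1) := by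
    refine mem_convexHull_manyToOneMatchings_one (fun i s => div_nonneg (h0 _ _) (by positivity))
      (fun i => ?_) (fun s => ?_)
    · rw [Fintype.sum_sigma]
      simpa only [S, of_apply, hsplit] using hrow i
    · simp only [S, of_apply, ← Finset.sum_div]
      exact (div_le_one (by exact_mod_cast s.2.pos)).2 (hcol s.1)
  have hlin : IsLinearMap ℝ sumSlots :=
    ⟨fun P Q => by ext; simp [sumSlots, Finset.sum_add_distrib],
      fun c P => by ext; simp [sumSlots, Finset.mul_sum]⟩
  have hM : M ∈ convexHull ℝ (sumSlots '' manyToOneMatchings 1) := by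
    rw [← hlin.image_convexHull]
    exact ⟨S, hS, by ext i j; exact hsplit i j⟩
  refine convexHull_mono ?_ hM
  rintro _ ⟨P, hP, rfl⟩
  exact sum_slots_mem_manyToOneMatchings hP

end Matrix

namespace AllocInstance

variable {A C : Type*} [Fintype A] [Fintype C]

theorem Valid.of_rowSums_eq {I : AllocInstance A C} {x y : A → C → ℝ} (hx : I.Valid x)
    (hy0 : ∀ a c, 0 ≤ y a c) (hsupp : ∀ a c, x a c = 0 → y a c = 0)
    (hcol : ∀ c, ∑ a, y a c ≤ I.quota c) (hrow : ∀ a, ∑ c, y a c = ∑ c, x a c) :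
    I.Valid y := by
  obtain ⟨⟨hx0, hER, -, hUD⟩, hPR, hPE⟩ := hx
  refine ⟨⟨hy0, fun a c h => hsupp a c (hER a c h), hcol, fun a => hrow a ▸ hUD a⟩, ?_, ?_⟩
  · intro c a ha a' ha' hstrict hpos
    have hxpos : 0 < x a c := (hx0 a c).lt_of_ne fun h => hpos.ne' (hsupp a c h.symm)
    rw [hrow a']
    exact hPR c a ha a' ha' hstrict hxpos
  · rintro ⟨z, hz, hzPR, hge, a, hlt⟩
    exact hPE ⟨z, hz, hzPR, fun a => hrow a ▸ hge a, a, hrow a ▸ hlt⟩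

end AllocInstance

theorem stmt15_general {A C : Type*} [Fintype A] [Fintype C] (I : AllocInstance A C)
    (x : A → C → ℝ) (hval : I.Valid x)
    (htot : ∀ a, (∑ c, x a c) = 0 ∨ (∑ c, x a c) = 1) :
    ∃ (k : ℕ) (xs : Fin k → A → C → ℝ) (lam : Fin k → ℝ),
      (∀ i, I.Valid (xs i) ∧ I.Integral (xs i)) ∧
      (∀ i, 0 ≤ lam i) ∧ (∑ i, lam i = 1) ∧
      (∀ a c, x a c = ∑ i, lam i * xs i a c) ∧
      (∀ i a, ∑ c, xs i a c = ∑ c, x a c) := by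
  classical
  obtain ⟨hx0, -, hQR, hUD⟩ := hval.1
  obtain ⟨k, xs, lam, hxs, hlam, hlam1, hcomb⟩ := exists_fin_pos_combination_of_mem_convexHull
    (Matrix.mem_convexHull_manyToOneMatchings (M := x) hx0 hUD hQR)
  have hentry : ∀ a c, x a c = ∑ i, lam i * xs i a c := by
    intro a c
    simp only [← hcomb, Matrix.sum_apply, Matrix.smul_apply, smul_eq_mul]
  have hxs0 i := Matrix.nonneg_of_mem_manyToOneMatchings (hxs i)
  have hsupp : ∀ i a c, x a c = 0 → xs i a c = 0 := fun i a c h =>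
    eq_of_sum_mul_eq_zero_or_one hlam hlam1 (fun j => hxs0 j a c)
      (fun j => Matrix.le_one_of_mem_manyToOneMatchings (hxs j) a c) (Or.inl rfl)
      ((hentry a c).symm.trans h) i
  have hrow : ∀ i a, ∑ c, xs i a c = ∑ c, x a c := fun i a =>
    eq_of_sum_mul_eq_zero_or_one hlam hlam1 (fun j => Finset.sum_nonneg fun c _ => hxs0 j a c)
      (fun j => (hxs j).2.1 a) (htot a)
      (by simp_rw [hentry a, Finset.mul_sum]; exact Finset.sum_comm) i
  refine ⟨k, xs, lam, fun i => ⟨?_, (hxs i).1⟩, fun i => (hlam i).le, hlam1, hentry, hrow⟩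
  exact hval.of_rowSums_eq (hxs0 i) (hsupp i) (hxs i).2.2 (hrow i)

/-- a valid allocation in which every agent's total allocation is an
integer is a convex combination of valid integral allocations, each giving every
agent the same total allocation as `x`. -/
theorem stmt15 {A C : Type*} [Fintype A] [Fintype C] (I : AllocInstance A C)
    (hpre : I.TotalPreorder)
    (x : A → C → ℝ) (hval : I.Valid x)
    (htot : ∀ a, (∑ c, x a c) = 0 ∨ (∑ c, x a c) = 1) :
    ∃ (k : ℕ) (xs : Fin k → A → C → ℝ) (lam : Fin k → ℝ),
      (∀ i, I.Valid (xs i) ∧ I.Integral (xs i)) ∧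
      (∀ i, 0 ≤ lam i) ∧ (∑ i, lam i = 1) ∧
      (∀ a c, x a c = ∑ i, lam i * xs i a c) ∧
      (∀ i a, ∑ c, xs i a c = ∑ c, x a c) :=
  stmt15_general I x hval htot
end
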